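/- arXiv:2008.07248 — 5 statements merged into one kernel-verified Lean document; each statement's English description precedes it below -/
import Mathlib

section
/- Let φ be a Borel measure on Ω_C. If φ is the surface area measure of some C-asymptotic convex set K, then there exists a constant M such that Δ(ω)^{d-1} · φ(ω) ≤ M for every nonempty compact subset ω ⊂ Ω_C. -/
/-!
The nearest-point map `P` onto `K` is `1`-Lipschitz, and a boundary point `x` of `K` with outer
normal `u` is the image under `P` of every point `x + t u`, `t ≥ 0`. If `θ < Δ(ω)`, rotating a
normal `u ∈ ω` by `θ` towards a point of `C` cannot leave `Ω_C`, so `⟪u, y⟫ ≤ -sin θ ‖y‖` on `C`;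
testing this against a fixed `y₀ ∈ K` puts `τ(K, ω)` in a ball of radius `O(1/Δ(ω))`. Following
the normal rays out to the boundary of a cube of side `O(1/Δ(ω))` exhibits `τ(K, ω)` as the image
under `P` of that boundary, whose `(d-1)`-dimensional Hausdorff measure is `O(Δ(ω)^{1-d})`.
-/

open scoped RealInnerProductSpace ENNReal NNReal
open MeasureTheory Metric Set

noncomputable section

variable {d : ℕ}

/-- `C` is a pointed closed convex cone with apex at the origin and nonempty interior. -/
def IsPCCCone (C : Set (EuclideanSpace ℝ (Fin d))) : Prop :=
  IsClosed C ∧ Convex ℝ C ∧ (∀ x ∈ C, ∀ t : ℝ, 0 ≤ t → t • x ∈ C) ∧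
    (∀ x ∈ C, -x ∈ C → x = 0) ∧ (interior C).Nonempty

/-- The polar cone `C°`. -/
def polarCone (C : Set (EuclideanSpace ℝ (Fin d))) : Set (EuclideanSpace ℝ (Fin d)) :=
  {x | ∀ y ∈ C, ⟪x, y⟫ ≤ 0}

/-- `Ω_C = S^{d-1} ∩ int C°`. -/
def omegaC (C : Set (EuclideanSpace ℝ (Fin d))) : Set (EuclideanSpace ℝ (Fin d)) :=
  Metric.sphere 0 1 ∩ interior (polarCone C)

/-- The reverse spherical image `τ(K, ω)`: the set of boundary points of `K` at which some
outer normal vector belongs to `ω`. -/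
def revSphImage (K ω : Set (EuclideanSpace ℝ (Fin d))) : Set (EuclideanSpace ℝ (Fin d)) :=
  {x ∈ frontier K | ∃ u ∈ ω, ∀ y ∈ K, ⟪u, y⟫ ≤ ⟪u, x⟫}

/-- The surface area measure `S_{d-1}(K, ω) = H^{d-1}(τ(K,ω))`. -/
def surfMeas (K ω : Set (EuclideanSpace ℝ (Fin d))) : ℝ≥0∞ :=
  μH[(d : ℝ) - 1] (revSphImage K ω)

/-- `K` is a `C`-asymptotic set. -/
def CAsymptotic (C K : Set (EuclideanSpace ℝ (Fin d))) : Prop :=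
  K.Nonempty ∧ IsClosed K ∧ Convex ℝ K ∧ K ⊆ C ∧
    ∀ ε > 0, ∃ R : ℝ, ∀ x ∈ frontier C, R ≤ ‖x‖ → Metric.infDist x K < ε

/-- `K` is a `C`-close set. -/
def CClose (C K : Set (EuclideanSpace ℝ (Fin d))) : Prop :=
  K.Nonempty ∧ IsClosed K ∧ Convex ℝ K ∧ K ⊆ C ∧ volume (C \ K) < ⊤

/-- `K` is a `C`-full set. -/
def CFull (C K : Set (EuclideanSpace ℝ (Fin d))) : Prop :=
  K.Nonempty ∧ IsClosed K ∧ Convex ℝ K ∧ K ⊆ C ∧ Bornology.IsBounded (C \ K)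

/-- The support function `h(K, u)`. -/
def suppFn (K : Set (EuclideanSpace ℝ (Fin d))) (u : EuclideanSpace ℝ (Fin d)) : ℝ :=
  sSup ((fun y => ⟪u, y⟫) '' K)

/-- `A_ε` within `Ω`. -/
def thick (Ω A : Set (EuclideanSpace ℝ (Fin d))) (ε : ℝ) : Set (EuclideanSpace ℝ (Fin d)) :=
  {y ∈ Ω | ∃ x ∈ A, dist x y < ε}

/-- The Lévy–Prokhorov distance of two measures (set functions) on `Ω`. -/
def lpDist (Ω : Set (EuclideanSpace ℝ (Fin d)))
    (μ ν : Set (EuclideanSpace ℝ (Fin d)) → ℝ≥0∞) : ℝ :=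
  sInf {ε : ℝ | 0 < ε ∧ ∀ A ⊆ Ω, MeasurableSet A →
    μ A ≤ ν (thick Ω A ε) + ENNReal.ofReal ε ∧ ν A ≤ μ (thick Ω A ε) + ENNReal.ofReal ε}

/-- The boundary of `Ω_C` relative to the sphere. -/
def bdOmega (C : Set (EuclideanSpace ℝ (Fin d))) : Set (EuclideanSpace ℝ (Fin d)) :=
  closure (omegaC C) \ omegaC C

/-- `Δ(ω)`: smallest angle between a vector of `ω` and a vector of `bd Ω_C`. -/
def sphDelta (C ω : Set (EuclideanSpace ℝ (Fin d))) : ℝ :=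
  sInf {θ | ∃ u ∈ ω, ∃ v ∈ bdOmega C, θ = InnerProductGeometry.angle u v}

/-- The bounded-Lipschitz norm `‖f‖_BL = ‖f‖_L + ‖f‖_∞` of `f` on `ω`. -/
def normBL (ω : Set (EuclideanSpace ℝ (Fin d))) (f : EuclideanSpace ℝ (Fin d) → ℝ) : ℝ :=
  sSup {t | ∃ u ∈ ω, ∃ v ∈ ω, u ≠ v ∧ t = |f u - f v| / dist u v} +
    sSup {t | ∃ u ∈ ω, t = |f u|}

open Filter InnerProductGeometry
open scoped Pointwise

section MetricProj

variable {F : Type*} [NormedAddCommGroup F] [InnerProductSpace ℝ F]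

def IsMetricProj (K : Set F) (P : F → F) : Prop :=
  ∀ z, P z ∈ K ∧ ∀ y ∈ K, ⟪z - P z, y - P z⟫ ≤ 0

theorem norm_sub_le_of_real_inner_le_zero {z₁ z₂ p₁ p₂ : F}
    (h₁ : ⟪z₁ - p₁, p₂ - p₁⟫ ≤ 0) (h₂ : ⟪z₂ - p₂, p₁ - p₂⟫ ≤ 0) : ‖p₁ - p₂‖ ≤ ‖z₁ - z₂‖ := by
  have key : ‖p₁ - p₂‖ ^ 2 ≤ ⟪z₁ - z₂, p₁ - p₂⟫ := by
    have expand : ⟪z₁ - z₂, p₁ - p₂⟫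
        = ‖p₁ - p₂‖ ^ 2 - ⟪z₁ - p₁, p₂ - p₁⟫ - ⟪z₂ - p₂, p₁ - p₂⟫ := by
      rw [← real_inner_self_eq_norm_sq, ← neg_sub p₁ p₂, inner_neg_right,
        show z₁ - z₂ = (z₁ - p₁) - (z₂ - p₂) + (p₁ - p₂) by abel, inner_add_left, inner_sub_left]
      ring
    linarith
  have hsq : ‖p₁ - p₂‖ ^ 2 ≤ ‖z₁ - z₂‖ * ‖p₁ - p₂‖ := key.trans (real_inner_le_norm _ _)
  nlinarith [norm_nonneg (p₁ - p₂), norm_nonneg (z₁ - z₂)]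

theorem exists_isMetricProj {K : Set F} (hne : K.Nonempty) (hK : IsComplete K)
    (hcv : Convex ℝ K) : ∃ P, IsMetricProj K P := by
  have (z : F) : ∃ p ∈ K, ∀ y ∈ K, ⟪z - p, y - p⟫ ≤ 0 := by
    obtain ⟨p, hpK, hp⟩ := exists_norm_eq_iInf_of_complete_convex hne hK hcv z
    exact ⟨p, hpK, (norm_eq_iInf_iff_real_inner_le_zero hcv hpK).mp hp⟩
  choose P hP using this
  exact ⟨P, hP⟩

namespace IsMetricProj

variable {K : Set F} {P : F → F}

theorem lipschitzWith_one (hP : IsMetricProj K P) : LipschitzWith 1 P :=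
  LipschitzWith.of_dist_le_mul fun z₁ z₂ => by
    simpa [dist_eq_norm] using
      norm_sub_le_of_real_inner_le_zero ((hP z₁).2 _ (hP z₂).1) ((hP z₂).2 _ (hP z₁).1)

theorem eq_of_real_inner_le_zero (hP : IsMetricProj K P) {z p : F} (hp : p ∈ K)
    (hzp : ∀ y ∈ K, ⟪z - p, y - p⟫ ≤ 0) : P z = p := by
  have := norm_sub_le_of_real_inner_le_zero ((hP z).2 p hp) (hzp _ (hP z).1)
  rwa [sub_self, norm_zero, norm_le_zero_iff, sub_eq_zero] at this

theorem apply_add_smul_eq (hP : IsMetricProj K P) {x u : F} (hx : x ∈ K)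
    (hu : ∀ y ∈ K, ⟪u, y⟫ ≤ ⟪u, x⟫) {t : ℝ} (ht : 0 ≤ t) : P (x + t • u) = x :=
  hP.eq_of_real_inner_le_zero hx fun y hy => by
    rw [add_sub_cancel_left, real_inner_smul_left, inner_sub_right]
    exact mul_nonpos_of_nonneg_of_nonpos ht (sub_nonpos.mpr (hu y hy))

end IsMetricProj

end MetricProj

section SupSphere

/-- The boundary of the cube `[-ρ, ρ]ⁿ`. -/
def supSphere (n : ℕ) (ρ : ℝ) : Set (EuclideanSpace ℝ (Fin n)) :=
  WithLp.ofLp ⁻¹' sphere 0 ρ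

theorem supSphere_eq_smul {n : ℕ} {ρ : ℝ} (hρ : 0 < ρ) : supSphere n ρ = ρ • supSphere n 1 := by
  ext z
  simp only [supSphere, mem_smul_set_iff_inv_smul_mem₀ hρ.ne', mem_preimage,
    mem_sphere_zero_iff_norm, WithLp.ofLp_smul, norm_smul, norm_inv, Real.norm_of_nonneg hρ.le]
  rw [inv_mul_eq_one₀ hρ.ne', eq_comm]

theorem supSphere_one_subset_iUnion_image_insertNth (m : ℕ) : supSphere (m + 1) 1 ⊆
    ⋃ i : Fin (m + 1), ⋃ σ ∈ ({-1, 1} : Set ℝ),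
      (fun y => WithLp.toLp 2 (Fin.insertNth i σ y)) '' closedBall 0 1 := by
  intro z hz
  have hz : ‖WithLp.ofLp z‖ = 1 := by simpa [supSphere] using hz
  obtain ⟨i, hi⟩ := (IsGreatest.pi_norm (WithLp.ofLp z)).1
  refine mem_iUnion.mpr ⟨i, mem_iUnion₂.mpr ⟨z i, ?_, Fin.removeNth i (WithLp.ofLp z), ?_, ?_⟩⟩
  · replace hi : |z i| = 1 := by simpa [hz] using hi
    rcases (abs_eq zero_le_one).mp hi with h | h <;> simp [h]
  · rw [mem_closedBall_zero_iff, ← hz]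
    exact (pi_norm_le_iff_of_nonneg (norm_nonneg _)).mpr fun j => norm_le_pi_norm _ (i.succAbove j)
  · simp

theorem hausdorffMeasure_supSphere_one_lt_top (m : ℕ) : μH[m] (supSphere (m + 1) 1) < ⊤ := by
  refine (measure_mono (supSphere_one_subset_iUnion_image_insertNth m)).trans_lt <|
    (measure_iUnion_fintype_le _ _).trans_lt <| ENNReal.sum_lt_top.mpr fun i _ => ?_
  refine measure_biUnion_lt_top (toFinite _) fun σ _ => ?_
  have hins : LipschitzWith 1 (Fin.insertNth (α := fun _ => ℝ) i σ) :=
    LipschitzWith.of_dist_le_mul fun y y' => by simp [Fin.dist_insertNth_insertNth]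
  have hlip := (PiLp.lipschitzWith_toLp 2 fun _ : Fin (m + 1) => ℝ).comp hins
  have hball : μH[m] (closedBall (0 : Fin m → ℝ) 1) < ⊤ := by
    have hvol := hausdorffMeasure_pi_real (ι := Fin m)
    rw [Fintype.card_fin] at hvol
    exact hvol ▸ measure_closedBall_lt_top
  exact (hlip.hausdorffMeasure_image_le (Nat.cast_nonneg m) _).trans_lt
    (ENNReal.mul_lt_top (by simp) hball)

theorem hausdorffMeasure_supSphere {m : ℕ} {ρ : ℝ} (hρ : 0 < ρ) :
    μH[m] (supSphere (m + 1) ρ) = ENNReal.ofReal (ρ ^ m) * μH[m] (supSphere (m + 1) 1) := by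
  rw [supSphere_eq_smul hρ, Measure.hausdorffMeasure_smul₀ (Nat.cast_nonneg m) hρ.ne',
    ENNReal.smul_def, smul_eq_mul, NNReal.rpow_natCast, ← ENNReal.ofReal_coe_nnreal,
    NNReal.coe_pow, coe_nnnorm, Real.norm_of_nonneg hρ.le]

theorem exists_nonneg_add_smul_mem_supSphere {n : ℕ} {x u : EuclideanSpace ℝ (Fin n)} (hu : u ≠ 0)
    {ρ : ℝ} (hx : ‖x‖ ≤ ρ) : ∃ t : ℝ, 0 ≤ t ∧ x + t • u ∈ supSphere n ρ := by
  have hray : Tendsto (fun t : ℝ => ‖x + t • u‖) atTop atTop := by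
    refine tendsto_atTop_mono' _ ?_ <| (tendsto_id.atTop_mul_const (norm_pos_iff.mpr hu)).atTop_add
      (tendsto_const_nhds (x := -‖x‖))
    filter_upwards [eventually_ge_atTop 0] with t ht
    have := norm_sub_norm_le (t • u) (-x)
    rw [norm_smul, Real.norm_of_nonneg ht, norm_neg, sub_neg_eq_add, add_comm] at this
    simpa [sub_eq_add_neg] using this
  have hsup : Tendsto (fun t : ℝ => ‖WithLp.ofLp (x + t • u)‖) atTop atTop :=
    tendsto_norm_atTop_iff_cobounded.mpr <|
      (PiLp.antilipschitzWith_ofLp 2 _).tendsto_cobounded.comp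
        (tendsto_norm_atTop_iff_cobounded.mp hray)
  have hcont : Continuous fun t : ℝ => ‖WithLp.ofLp (x + t • u)‖ := by fun_prop
  have h0 : ‖WithLp.ofLp (x + (0 : ℝ) • u)‖ ≤ ρ := by
    simpa using ((PiLp.lipschitzWith_ofLp 2 _).dist_le_mul x 0).trans (by simpa using hx)
  obtain ⟨t, ht, hρ⟩ := intermediate_value_Ici hcont.continuousOn hsup h0
  exact ⟨t, ht, by simpa [supSphere] using hρ⟩

end SupSphere

section Arc

variable {F : Type*} [NormedAddCommGroup F] [InnerProductSpace ℝ F] {u e : F}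

theorem norm_cos_smul_add_sin_smul (hu : ‖u‖ = 1) (he : ‖e‖ = 1) (hue : ⟪u, e⟫ = 0) (t : ℝ) :
    ‖Real.cos t • u + Real.sin t • e‖ = 1 := by
  have hsq : ‖Real.cos t • u + Real.sin t • e‖ ^ 2 = 1 := by
    rw [norm_add_sq_real, inner_smul_left, inner_smul_right, hue, norm_smul, norm_smul, hu, he]
    simp [Real.cos_sq_add_sin_sq]
  exact (pow_eq_one_iff_of_nonneg (norm_nonneg _) two_ne_zero).mp hsq

theorem angle_cos_smul_add_sin_smul (hu : ‖u‖ = 1) (he : ‖e‖ = 1) (hue : ⟪u, e⟫ = 0) {t : ℝ}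
    (ht₀ : 0 ≤ t) (htπ : t ≤ Real.pi) : angle u (Real.cos t • u + Real.sin t • e) = t := by
  rw [angle, norm_cos_smul_add_sin_smul hu he hue, hu, inner_add_right, inner_smul_right,
    inner_smul_right, real_inner_self_eq_norm_sq, hu, hue]
  simpa using Real.arccos_cos ht₀ htπ

/-- The witness `e` is the unit vector along the component of `y` orthogonal to `u`. -/
theorem exists_real_inner_cos_smul_add_sin_smul_pos (hu : ‖u‖ = 1) {y : F} {θ : ℝ}
    (hθ₀ : 0 ≤ θ) (hθ : θ < Real.pi / 2) (hy₀ : ⟪u, y⟫ ≤ 0) (hy : -(Real.sin θ * ‖y‖) < ⟪u, y⟫) :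
    ∃ e : F, ‖e‖ = 1 ∧ ⟪u, e⟫ = 0 ∧ 0 < ⟪Real.cos θ • u + Real.sin θ • e, y⟫ := by
  set c := ⟪u, y⟫
  set w := y - c • u
  have huw : ⟪u, w⟫ = 0 := by
    rw [inner_sub_right, inner_smul_right, real_inner_self_eq_norm_sq, hu]
    ring
  have hyw : y = w + c • u := (sub_add_cancel y _).symm
  have hwy : ⟪w, y⟫ = ‖w‖ ^ 2 := by
    rw [hyw, inner_add_right, real_inner_self_eq_norm_sq, inner_smul_right, real_inner_comm, huw]
    ring
  have hw : ‖y‖ ^ 2 = ‖w‖ ^ 2 + c ^ 2 := by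
    conv_lhs => rw [hyw]
    rw [norm_add_sq_real, inner_smul_right, real_inner_comm, huw, norm_smul, hu,
      Real.norm_eq_abs]
    simp
  have hsin := Real.sin_sq_add_cos_sq θ
  have hcos : 0 < Real.cos θ := Real.cos_pos_of_mem_Ioo ⟨by linarith [Real.pi_pos], hθ⟩
  have hsin₀ : 0 ≤ Real.sin θ := Real.sin_nonneg_of_nonneg_of_le_pi hθ₀ (by linarith)
  have hc : c ^ 2 < Real.sin θ ^ 2 * ‖y‖ ^ 2 := by nlinarith
  have hw₀ : 0 < ‖w‖ := by nlinarith [norm_nonneg w]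
  refine ⟨‖w‖⁻¹ • w, ?_, ?_, ?_⟩
  · rw [norm_smul, norm_inv, norm_norm, inv_mul_cancel₀ hw₀.ne']
  · rw [inner_smul_right, huw, mul_zero]
  · rw [inner_add_left, real_inner_smul_left, real_inner_smul_left, real_inner_smul_left, hwy,
      pow_two, inv_mul_cancel_left₀ hw₀.ne']
    have : (c * Real.cos θ) ^ 2 < (Real.sin θ * ‖w‖) ^ 2 := by nlinarith
    nlinarith [mul_nonneg hsin₀ hw₀.le]

end Arc

section SphDelta

variable {C ω : Set (EuclideanSpace ℝ (Fin d))}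

theorem sphDelta_nonneg (C ω : Set (EuclideanSpace ℝ (Fin d))) : 0 ≤ sphDelta C ω :=
  Real.sInf_nonneg <| by rintro _ ⟨u, -, v, -, rfl⟩; exact angle_nonneg u v

theorem sphDelta_le_angle {u v : EuclideanSpace ℝ (Fin d)} (hu : u ∈ ω) (hv : v ∈ bdOmega C) :
    sphDelta C ω ≤ angle u v :=
  csInf_le ⟨0, by rintro _ ⟨u, -, v, -, rfl⟩; exact angle_nonneg u v⟩ ⟨u, hu, v, hv, rfl⟩

theorem sphDelta_le_pi (C ω : Set (EuclideanSpace ℝ (Fin d))) : sphDelta C ω ≤ Real.pi := by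
  rcases eq_empty_or_nonempty {θ | ∃ u ∈ ω, ∃ v ∈ bdOmega C, θ = angle u v}
    with h | ⟨_, u, hu, v, hv, rfl⟩
  · rw [sphDelta, h, Real.sInf_empty]
    exact Real.pi_pos.le
  · exact (sphDelta_le_angle hu hv).trans (angle_le_pi u v)

theorem exists_mem_bdOmega_angle_le {u e : EuclideanSpace ℝ (Fin d)} (hu : u ∈ omegaC C)
    (he : ‖e‖ = 1) (hue : ⟪u, e⟫ = 0) {θ : ℝ} (hθ₀ : 0 ≤ θ) (hθπ : θ ≤ Real.pi)
    (hθ : Real.cos θ • u + Real.sin θ • e ∉ interior (polarCone C)) :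
    ∃ v ∈ bdOmega C, angle u v ≤ θ := by
  have hu1 : ‖u‖ = 1 := mem_sphere_zero_iff_norm.mp hu.1
  set γ : ℝ → EuclideanSpace ℝ (Fin d) := fun t => Real.cos t • u + Real.sin t • e
  have hγ : Continuous γ := by fun_prop
  set U := γ ⁻¹' interior (polarCone C)
  have hU : IsOpen U := isOpen_interior.preimage hγ
  have hγU : γ '' U ⊆ omegaC C := by
    rintro _ ⟨t, ht, rfl⟩
    exact ⟨mem_sphere_zero_iff_norm.mpr (norm_cos_smul_add_sin_smul hu1 he hue t), ht⟩
  obtain ⟨t, ⟨htU, ht⟩, htU'⟩ : ∃ t ∈ closure U ∩ Icc 0 θ, t ∉ U := by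
    by_contra! h
    have h0 : (0 : ℝ) ∈ Icc 0 θ ∩ U := ⟨left_mem_Icc.mpr hθ₀, by simpa [U, γ] using hu.2⟩
    exact hθ (isPreconnected_Icc.subset_of_closure_inter_subset hU ⟨0, h0⟩ h ⟨hθ₀, le_rfl⟩)
  refine ⟨γ t, ⟨?_, fun h => htU' h.2⟩, ?_⟩
  · exact closure_mono hγU (image_closure_subset_closure_image hγ ⟨t, htU, rfl⟩)
  · exact (angle_cos_smul_add_sin_smul hu1 he hue ht.1 (ht.2.trans hθπ)).le.trans ht.2

/-- If not, rotating `u` by `θ` towards `y` leaves the polar cone, so it crosses `bd Ω_C` at an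
angle at most `θ < Δ(ω)` from `u`. -/
theorem real_inner_le_neg_sin_mul_norm (hω : ω ⊆ omegaC C) {u y : EuclideanSpace ℝ (Fin d)}
    (hu : u ∈ ω) (hy : y ∈ C) {θ : ℝ} (hθ₀ : 0 ≤ θ) (hθ : θ < Real.pi / 2)
    (hθδ : θ < sphDelta C ω) : ⟪u, y⟫ ≤ -(Real.sin θ * ‖y‖) := by
  by_contra! h
  have hu1 : ‖u‖ = 1 := mem_sphere_zero_iff_norm.mp (hω hu).1
  obtain ⟨e, he, hue, hpos⟩ := exists_real_inner_cos_smul_add_sin_smul_pos hu1 hθ₀ hθ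
    (interior_subset (hω hu).2 y hy) h
  obtain ⟨v, hv, hangle⟩ := exists_mem_bdOmega_angle_le (hω hu) he hue hθ₀
    (by linarith [Real.pi_pos]) fun hint => hpos.not_ge (interior_subset hint y hy)
  linarith [sphDelta_le_angle hu hv]

end SphDelta

section SurfaceArea

variable {C K ω : Set (EuclideanSpace ℝ (Fin d))}

theorem mul_norm_le_of_mem_revSphImage (hK : IsClosed K) (hKC : K ⊆ C)
    {y₀ : EuclideanSpace ℝ (Fin d)} (hy₀ : y₀ ∈ K) (hω : ω ⊆ sphere 0 1) {s : ℝ}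
    (hs : ∀ u ∈ ω, ∀ y ∈ C, ⟪u, y⟫ ≤ -(s * ‖y‖))
    {x : EuclideanSpace ℝ (Fin d)} (hx : x ∈ revSphImage K ω) : s * ‖x‖ ≤ ‖y₀‖ := by
  obtain ⟨hxK, u, hu, hux⟩ := hx
  have hu1 : ‖u‖ = 1 := mem_sphere_zero_iff_norm.mp (hω hu)
  have hy₀u : -‖y₀‖ ≤ ⟪u, y₀⟫ := by
    simpa [hu1] using neg_le_of_abs_le (abs_real_inner_le_norm u y₀)
  linarith [hs u hu x (hKC (hK.frontier_subset hxK)), hux y₀ hy₀]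

theorem revSphImage_subset_image_supSphere (hK : IsClosed K)
    {P : EuclideanSpace ℝ (Fin d) → EuclideanSpace ℝ (Fin d)} (hP : IsMetricProj K P)
    (hω : ω ⊆ sphere 0 1) {ρ : ℝ} (hρ : ∀ x ∈ revSphImage K ω, ‖x‖ ≤ ρ) :
    revSphImage K ω ⊆ P '' supSphere d ρ := by
  intro x hx
  obtain ⟨u, hu, hux⟩ := hx.2
  obtain ⟨t, ht, hts⟩ :=
    exists_nonneg_add_smul_mem_supSphere (ne_zero_of_mem_unit_sphere ⟨u, hω hu⟩) (hρ x hx)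
  exact ⟨_, hts, hP.apply_add_smul_eq (hK.frontier_subset hx.1) hux ht⟩

end SurfaceArea

theorem surfMeas_le_of_lt_sphDelta {m : ℕ} {C K ω : Set (EuclideanSpace ℝ (Fin (m + 1)))}
    (hK : IsClosed K) (hcv : Convex ℝ K) (hKC : K ⊆ C) {y₀ : EuclideanSpace ℝ (Fin (m + 1))}
    (hy₀ : y₀ ∈ K) (hω : ω ⊆ omegaC C) {θ : ℝ} (hθ₀ : 0 < θ) (hθ : θ < Real.pi / 2)
    (hθδ : θ < sphDelta C ω) :
    surfMeas K ω ≤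
      ENNReal.ofReal (((‖y₀‖ + 1) / Real.sin θ) ^ m) * μH[m] (supSphere (m + 1) 1) := by
  obtain ⟨P, hP⟩ := exists_isMetricProj ⟨y₀, hy₀⟩ hK.isComplete hcv
  have hsin : 0 < Real.sin θ := Real.sin_pos_of_pos_of_lt_pi hθ₀ (by linarith [Real.pi_pos])
  have hωS : ω ⊆ sphere 0 1 := fun u hu => (hω hu).1
  have hρ (x) (hx : x ∈ revSphImage K ω) : ‖x‖ ≤ (‖y₀‖ + 1) / Real.sin θ := by
    rw [le_div_iff₀ hsin, mul_comm]
    linarith [mul_norm_le_of_mem_revSphImage hK hKC hy₀ hωS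
      (fun u hu y hy => real_inner_le_neg_sin_mul_norm hω hu hy hθ₀.le hθ hθδ) hx]
  calc surfMeas K ω = μH[m] (revSphImage K ω) := by simp [surfMeas]
    _ ≤ μH[m] (P '' supSphere (m + 1) ((‖y₀‖ + 1) / Real.sin θ)) :=
      measure_mono (revSphImage_subset_image_supSphere hK hP hωS hρ)
    _ ≤ μH[m] (supSphere (m + 1) ((‖y₀‖ + 1) / Real.sin θ)) := by
      simpa using hP.lipschitzWith_one.hausdorffMeasure_image_le (Nat.cast_nonneg m) _
    _ = _ := hausdorffMeasure_supSphere (by positivity)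

theorem le_two_mul_pi_mul_sin_div_four {x : ℝ} (hx₀ : 0 ≤ x) (hxπ : x ≤ Real.pi) :
    x ≤ 2 * Real.pi * Real.sin (x / 4) := by
  have hpi := Real.pi_pos
  calc x = 2 * Real.pi * (2 / Real.pi * (x / 4)) := by field_simp; ring
    _ ≤ _ := by gcongr; exact Real.mul_le_sin (by positivity) (by linarith)

theorem ofReal_sphDelta_pow_mul_surfMeas_le {m : ℕ} (hm : m ≠ 0)
    {C K ω : Set (EuclideanSpace ℝ (Fin (m + 1)))} (hK : IsClosed K) (hcv : Convex ℝ K)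
    (hKC : K ⊆ C) {y₀ : EuclideanSpace ℝ (Fin (m + 1))} (hy₀ : y₀ ∈ K) (hω : ω ⊆ omegaC C) :
    ENNReal.ofReal (sphDelta C ω ^ m) * surfMeas K ω ≤
      ENNReal.ofReal ((2 * Real.pi * (‖y₀‖ + 1)) ^ m) * μH[m] (supSphere (m + 1) 1) := by
  rcases (sphDelta_nonneg C ω).eq_or_lt with hδ | hδ
  · simp [← hδ, zero_pow hm]
  set δ := sphDelta C ω
  have hδπ : δ ≤ Real.pi := sphDelta_le_pi C ω
  have hδs := le_two_mul_pi_mul_sin_div_four hδ.le hδπ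
  have hsin : 0 < Real.sin (δ / 4) := by nlinarith [Real.pi_pos]
  have hδρ : δ * ((‖y₀‖ + 1) / Real.sin (δ / 4)) ≤ 2 * Real.pi * (‖y₀‖ + 1) := by
    rw [mul_div_assoc', div_le_iff₀ hsin]
    nlinarith [norm_nonneg y₀]
  calc ENNReal.ofReal (δ ^ m) * surfMeas K ω
      ≤ ENNReal.ofReal (δ ^ m) * (ENNReal.ofReal (((‖y₀‖ + 1) / Real.sin (δ / 4)) ^ m) *
          μH[m] (supSphere (m + 1) 1)) := by
        gcongr
        exact surfMeas_le_of_lt_sphDelta hK hcv hKC hy₀ hω (by positivity)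
          (by linarith) (by linarith)
    _ = ENNReal.ofReal ((δ * ((‖y₀‖ + 1) / Real.sin (δ / 4))) ^ m) *
          μH[m] (supSphere (m + 1) 1) := by
        rw [mul_pow, ENNReal.ofReal_mul (by positivity), mul_assoc]
    _ ≤ _ := by
        gcongr ENNReal.ofReal ?_ * _
        exact pow_le_pow_left₀ (by positivity) hδρ m

theorem necessary_condition_surface_area_measure_general (d : ℕ) (hd : 2 ≤ d)
    (C : Set (EuclideanSpace ℝ (Fin d)))
    (φ : Measure (EuclideanSpace ℝ (Fin d)))
    (K : Set (EuclideanSpace ℝ (Fin d))) (hK : CAsymptotic C K)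
    (hSK : ∀ ω ⊆ omegaC C, MeasurableSet ω → surfMeas K ω = φ ω) :
    ∃ M : ℝ, ∀ ω ⊆ omegaC C, ω.Nonempty → IsCompact ω →
      ENNReal.ofReal (sphDelta C ω ^ (d - 1)) * φ ω ≤ ENNReal.ofReal M := by
  obtain ⟨m, rfl⟩ : ∃ m, d = m + 1 := ⟨d - 1, by omega⟩
  obtain ⟨⟨y₀, hy₀⟩, hKcl, hKcv, hKC, -⟩ := hK
  refine ⟨(2 * Real.pi * (‖y₀‖ + 1)) ^ m * (μH[m] (supSphere (m + 1) 1)).toReal,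
    fun ω hω _ hcpt => ?_⟩
  rw [← hSK ω hω hcpt.isClosed.measurableSet, Nat.add_sub_cancel,
    ENNReal.ofReal_mul (by positivity),
    ENNReal.ofReal_toReal (hausdorffMeasure_supSphere_one_lt_top m).ne]
  exact ofReal_sphDelta_pow_mul_surfMeas_le (by omega) hKcl hKcv hKC hy₀ hω

/-- **Theorem 4.1 (necessary condition).** If a Borel measure `φ` on `Ω_C` is the surface area
measure of some `C`-asymptotic convex set `K`, then `ω ↦ Δ(ω)^{d-1} φ(ω)` is bounded over
nonempty compact subsets `ω ⊆ Ω_C`. -/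
theorem necessary_condition_surface_area_measure (d : ℕ) (hd : 2 ≤ d)
    (C : Set (EuclideanSpace ℝ (Fin d))) (hC : IsPCCCone C)
    (φ : Measure (EuclideanSpace ℝ (Fin d))) (hφ : φ (omegaC C)ᶜ = 0)
    (K : Set (EuclideanSpace ℝ (Fin d))) (hK : CAsymptotic C K)
    (hSK : ∀ ω ⊆ omegaC C, MeasurableSet ω → surfMeas K ω = φ ω) :
    ∃ M : ℝ, ∀ ω ⊆ omegaC C, ω.Nonempty → IsCompact ω →
      ENNReal.ofReal (sphDelta C ω ^ (d - 1)) * φ ω ≤ ENNReal.ofReal M :=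
  necessary_condition_surface_area_measure_general d hd C φ K hK hSK
end
end

section
/- Let K be a C-asymptotic set whose surface area measure satisfies S_{d-1}(K,Ω_C) ≤ b < ∞, and let r := dist(o, K). Then r^{d-1} · H^{d-1}(S^{d-1} ∩ int C) ≤ b; in particular, r is bounded by a constant depending only on C and b. -/
open scoped RealInnerProductSpace ENNReal NNReal
open MeasureTheory Metric Set

noncomputable section

variable {d : ℕ}

open scoped Pointwise
open Topology Filter

/-!
Radial projection onto the sphere of radius `r = dist(o, K)` is `1`-Lipschitz outside the open
ball of radius `r`, and it maps `τ(K, Ω_C)` onto `r • (S^{d-1} ∩ int C)`: a ray through a point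
of `int C` starts at `o ∉ K` and eventually enters `K` (as `K + C ⊆ K`), so it crosses `∂K` at a
point of `int C`, and every outer normal of `K` there lies in `int C°`. Both facts come from
asymptoticity: a linear functional bounded above on `K` is nonpositive on `∂C`, hence on all of
the pointed cone `C`, and strictly negative on `∂C \ {o}` when its supremum on `K` is negative.
-/

section RadialProjection

variable {E : Type*} [NormedAddCommGroup E] [InnerProductSpace ℝ E]

lemma lipschitzOnWith_div_norm_smul {r : ℝ} (hr : 0 < r) :
    LipschitzOnWith 1 (fun x : E => (r / ‖x‖) • x) {x | r ≤ ‖x‖} := by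
  refine LipschitzOnWith.of_dist_le_mul fun x hx y hy => ?_
  simp only [mem_ofPred_eq] at hx hy
  have hx0 : 0 < ‖x‖ := hr.trans_le hx
  have hy0 : 0 < ‖y‖ := hr.trans_le hy
  rw [NNReal.coe_one, one_mul, dist_eq_norm, dist_eq_norm,
    ← sq_le_sq₀ (norm_nonneg _) (norm_nonneg _), norm_sub_sq_real, norm_sub_sq_real,
    norm_smul, norm_smul, real_inner_smul_left, real_inner_smul_right,
    Real.norm_of_nonneg (by positivity), Real.norm_of_nonneg (by positivity),
    div_mul_cancel₀ _ hx0.ne', div_mul_cancel₀ _ hy0.ne']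
  -- with `c` the cosine of the angle: `2r²(1 - c) ≤ (‖x‖ - ‖y‖)² + 2‖x‖‖y‖(1 - c)`
  have key : r / ‖x‖ * (r / ‖y‖ * ⟪x, y⟫) = r ^ 2 * (⟪x, y⟫ / (‖x‖ * ‖y‖)) := by
    field_simp
  have hc : ⟪x, y⟫ / (‖x‖ * ‖y‖) ≤ 1 := (div_le_one (by positivity)).2 (real_inner_le_norm x y)
  have hxy : ⟪x, y⟫ = ‖x‖ * ‖y‖ * (⟪x, y⟫ / (‖x‖ * ‖y‖)) := by field_simp
  rw [key]
  generalize ⟪x, y⟫ / (‖x‖ * ‖y‖) = c at hc hxy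
  rw [hxy]
  nlinarith [mul_le_mul hx hy hr.le hx0.le, sq_nonneg (‖x‖ - ‖y‖)]

end RadialProjection

lemma IsPreconnected.inter_frontier_nonempty {X : Type*} [TopologicalSpace X] {s t : Set X}
    (hs : IsPreconnected s) (hst : (s ∩ t).Nonempty) (hst' : (s \ t).Nonempty) :
    (s ∩ frontier t).Nonempty := by
  by_contra h
  rw [not_nonempty_iff_eq_empty, ← disjoint_iff_inter_eq_empty] at h
  have hcover : s ⊆ interior t ∪ (closure t)ᶜ := fun x hx => by
    by_cases hxt : x ∈ closure t
    · exact Or.inl (by_contra fun hxi => h.ne_of_mem hx ⟨hxt, hxi⟩ rfl)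
    · exact Or.inr hxt
  obtain ⟨x, hxs, hxt⟩ := hst
  have hint : s ⊆ interior t := by
    refine hs.subset_left_of_subset_union isOpen_interior isClosed_closure.isOpen_compl
      (disjoint_compl_right.mono_left interior_subset_closure) hcover ⟨x, hxs, ?_⟩
    exact (hcover hxs).resolve_right (not_not.2 (subset_closure hxt))
  obtain ⟨y, hys, hyt⟩ := hst'
  exact hyt (interior_subset (hint hys))

lemma hausdorffMeasure_smul_of_pos {E : Type*} [NormedAddCommGroup E] [NormedSpace ℝ E]
    [MeasurableSpace E] [BorelSpace E] {r : ℝ} (hr : 0 < r) (k : ℕ) (s : Set E) :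
    μH[k] (r • s) = ENNReal.ofReal (r ^ k) * μH[k] s := by
  rw [Measure.hausdorffMeasure_smul₀ k.cast_nonneg hr.ne', ENNReal.smul_def, smul_eq_mul,
    NNReal.rpow_natCast, Real.nnnorm_of_nonneg hr.le, ENNReal.coe_pow,
    ENNReal.ofReal_pow hr.le, ENNReal.ofReal_eq_coe_nnreal hr.le]

section Halfspace

variable {E : Type*} [NormedAddCommGroup E] [InnerProductSpace ℝ E]

lemma exists_ne_zero_inner_eq_zero (hE : 2 ≤ Module.finrank ℝ E) (u : E) :
    ∃ w : E, w ≠ 0 ∧ ⟪u, w⟫ = 0 := by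
  have hspan : (ℝ ∙ u) ≠ ⊤ := fun htop => by
    have := finrank_span_le_card (R := ℝ) ({u} : Set E)
    rw [htop, finrank_top] at this
    simp only [toFinset_singleton, Finset.card_singleton] at this
    omega
  obtain ⟨w, hw, hw0⟩ :=
    Submodule.exists_mem_ne_zero_of_ne_bot (mt Submodule.orthogonal_eq_bot_iff.1 hspan)
  exact ⟨w, hw0, Submodule.inner_right_of_mem_orthogonal (Submodule.mem_span_singleton_self u) hw⟩

/-- If `⟪u, ·⟫ > 0` somewhere on `C` but not on `frontier C`, then `C` contains the whole open
half-space `⟪u, ·⟫ > 0`, hence its boundary hyperplane, which contains a line. -/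
lemma inner_nonpos_of_forall_frontier {C : Set E} (hE : 2 ≤ Module.finrank ℝ E)
    (hCcl : IsClosed C) (hCpt : ∀ x ∈ C, -x ∈ C → x = 0) {u : E}
    (hu : ∀ y ∈ frontier C, ⟪u, y⟫ ≤ 0) {y : E} (hy : y ∈ C) : ⟪u, y⟫ ≤ 0 := by
  by_contra! hpos
  set H : Set E := {z | 0 < ⟪u, z⟫}
  have hHC : H ⊆ interior C := by
    have hH_int : ∀ z ∈ C ∩ H, z ∈ interior C := fun z hz => by
      by_contra hzi
      exact (hu z ⟨subset_closure hz.1, hzi⟩).not_gt hz.2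
    have hHconn : IsPreconnected H := (convex_halfSpace_gt (innerₗ E u).isLinear 0).isPreconnected
    exact hHconn.subset_of_closure_inter_subset isOpen_interior ⟨y, hpos, hH_int y ⟨hy, hpos⟩⟩
      fun z hz => hH_int z ⟨closure_minimal interior_subset hCcl hz.1, hz.2⟩
  have hclosure : ∀ w : E, ⟪u, w⟫ = 0 → w ∈ C := fun w hw => by
    have hlim : Tendsto (fun t : ℝ => w + t • u) (𝓝[>] 0) (𝓝 w) :=
      (Continuous.tendsto' (by fun_prop) 0 w (by simp)).mono_left nhdsWithin_le_nhds
    refine hCcl.mem_of_tendsto hlim (eventually_nhdsWithin_of_forall fun t (ht : 0 < t) => ?_)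
    have hu0 : u ≠ 0 := by rintro rfl; simp at hpos
    refine interior_subset (hHC ?_)
    simp only [H, mem_ofPred_eq, inner_add_right, hw, real_inner_smul_right,
      real_inner_self_eq_norm_sq, zero_add]
    positivity
  obtain ⟨w, hw0, huw⟩ := exists_ne_zero_inner_eq_zero hE u
  exact hw0 (hCpt w (hclosure w huw) (hclosure (-w) (by rw [inner_neg_right, huw, neg_zero])))

end Halfspace

section PolarCone

variable {C : Set (EuclideanSpace ℝ (Fin d))} {u y : EuclideanSpace ℝ (Fin d)}

lemma inner_neg_of_mem_polarCone_of_mem_interior (hu : u ∈ polarCone C) (hu0 : u ≠ 0)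
    (hy : y ∈ interior C) : ⟪u, y⟫ < 0 := by
  have hlim : Tendsto (fun t : ℝ => y + t • u) (𝓝[>] 0) (𝓝 y) :=
    (Continuous.tendsto' (by fun_prop) 0 y (by simp)).mono_left nhdsWithin_le_nhds
  obtain ⟨t, htC, ht⟩ :=
    ((hlim.eventually (mem_interior_iff_mem_nhds.1 hy)).and self_mem_nhdsWithin).exists
  have := hu _ htC
  rw [inner_add_right, real_inner_smul_right, real_inner_self_eq_norm_sq] at this
  have : 0 < t * ‖u‖ ^ 2 := mul_pos ht (by positivity)
  linarith

/-- Strict negativity on the compact set `C ∩ sphere 0 1` is an open condition on `u`. -/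
lemma mem_interior_polarCone_of_inner_neg
    (hCsmul : ∀ x ∈ C, ∀ t : ℝ, 0 ≤ t → t • x ∈ C) (hCcl : IsClosed C)
    (hu : ∀ y ∈ C, y ≠ 0 → ⟪u, y⟫ < 0) : u ∈ interior (polarCone C) := by
  have hS : IsCompact (C ∩ sphere 0 1) := (isCompact_sphere 0 1).inter_left hCcl
  have hnear : ∀ᶠ v in 𝓝 u, ∀ y ∈ C ∩ sphere 0 1, ⟪v, y⟫ < 0 := by
    refine hS.eventually_forall_of_forall_eventually fun y hy => ?_
    have hy0 : y ≠ 0 := ne_zero_of_mem_unit_sphere ⟨y, hy.2⟩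
    exact (continuous_fst.inner continuous_snd).continuousAt.eventually_lt continuousAt_const
      (hu y hy.1 hy0)
  refine mem_interior_iff_mem_nhds.2 (Filter.mem_of_superset hnear fun v hv y hy => ?_)
  rcases eq_or_ne y 0 with rfl | hy0
  · simp
  have hyn : 0 < ‖y‖ := norm_pos_iff.2 hy0
  have := hv (‖y‖⁻¹ • y) ⟨hCsmul y hy _ (inv_nonneg.2 hyn.le), by simp [norm_smul, hyn.ne']⟩
  rw [real_inner_smul_right] at this
  exact (neg_of_mul_neg_right this (inv_nonneg.2 hyn.le)).le

end PolarCone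

namespace IsPCCCone

variable {C : Set (EuclideanSpace ℝ (Fin d))} {t : ℝ} {y : EuclideanSpace ℝ (Fin d)}

lemma smul_eq (hC : IsPCCCone C) (ht : 0 < t) : t • C = C := by
  refine (smul_set_subset_iff.2 fun y hy => hC.2.2.1 y hy t ht.le).antisymm fun y hy => ?_
  exact ⟨t⁻¹ • y, hC.2.2.1 y hy _ (inv_nonneg.2 ht.le), smul_inv_smul₀ ht.ne' y⟩

lemma smul_mem_interior (hC : IsPCCCone C) (ht : 0 < t) (hy : y ∈ interior C) :
    t • y ∈ interior C := by
  simpa [← interior_smul₀ ht.ne', hC.smul_eq ht] using smul_mem_smul_set (a := t) hy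

lemma smul_mem_frontier (hC : IsPCCCone C) (ht : 0 < t) (hy : y ∈ frontier C) :
    t • y ∈ frontier C := by
  rw [hC.1.frontier_eq] at hy ⊢
  refine ⟨hC.2.2.1 y hy.1 t ht.le, fun hty => hy.2 ?_⟩
  simpa [smul_smul, ht.ne'] using hC.smul_mem_interior (inv_pos.2 ht) hty

end IsPCCCone

namespace CAsymptotic

variable {C K : Set (EuclideanSpace ℝ (Fin d))} {u x y : EuclideanSpace ℝ (Fin d)} {c : ℝ}

lemma exists_le_inner (hC : IsPCCCone C) (hK : CAsymptotic C K) (hy : y ∈ frontier C)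
    (hy0 : y ≠ 0) (u : EuclideanSpace ℝ (Fin d)) {ε : ℝ} (hε : 0 < ε) (T : ℝ) :
    ∃ t ≥ T, ∃ a ∈ K, t * ⟪u, y⟫ - ε * ‖u‖ ≤ ⟪u, a⟫ := by
  obtain ⟨R, hR⟩ := hK.2.2.2.2 ε hε
  have hy0' : 0 < ‖y‖ := norm_pos_iff.2 hy0
  set t := max (max T (R / ‖y‖)) 1
  have ht : 0 < t := one_pos.trans_le (le_max_right _ _)
  have htR : R ≤ ‖t • y‖ := by
    rw [norm_smul, Real.norm_of_nonneg ht.le, ← div_le_iff₀ hy0']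
    exact (le_max_right _ _).trans (le_max_left _ _)
  obtain ⟨a, ha, hdist⟩ :=
    (infDist_lt_iff hK.1).1 (hR _ (hC.smul_mem_frontier ht hy) htR)
  refine ⟨t, (le_max_left _ _).trans (le_max_left _ _), a, ha, ?_⟩
  have h1 : ⟪u, t • y - a⟫ ≤ ‖u‖ * ε :=
    (real_inner_le_norm _ _).trans (mul_le_mul_of_nonneg_left (dist_eq_norm _ a ▸ hdist.le)
      (norm_nonneg u))
  rw [inner_sub_right, real_inner_smul_right] at h1
  linarith

lemma inner_nonpos_of_frontier (hC : IsPCCCone C) (hK : CAsymptotic C K)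
    (hc : ∀ a ∈ K, ⟪u, a⟫ ≤ c) (hy : y ∈ frontier C) : ⟪u, y⟫ ≤ 0 := by
  rcases eq_or_ne y 0 with rfl | hy0
  · simp
  by_contra! hpos
  obtain ⟨t, hT, a, ha, hta⟩ := hK.exists_le_inner hC hy hy0 u one_pos ((c + ‖u‖ + 1) / ⟪u, y⟫)
  have : c + ‖u‖ + 1 ≤ t * ⟪u, y⟫ := (div_le_iff₀ hpos).1 hT
  linarith [hc a ha]

lemma inner_neg_of_frontier (hC : IsPCCCone C) (hK : CAsymptotic C K)
    (hc : ∀ a ∈ K, ⟪u, a⟫ ≤ c) (hc0 : c < 0) (hy : y ∈ frontier C) (hy0 : y ≠ 0) :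
    ⟪u, y⟫ < 0 := by
  by_contra! hnonneg
  have hε : 0 < -c / (‖u‖ + 1) := div_pos (neg_pos.2 hc0) (by positivity)
  obtain ⟨t, ht, a, ha, hta⟩ := hK.exists_le_inner hC hy hy0 u hε 0
  have h1 : -c / (‖u‖ + 1) * (‖u‖ + 1) = -c := div_mul_cancel₀ _ (by positivity)
  nlinarith [hc a ha, mul_nonneg ht hnonneg, norm_nonneg u]

lemma mem_polarCone_of_bddAbove (hd : 2 ≤ d) (hC : IsPCCCone C) (hK : CAsymptotic C K)
    (hc : ∀ a ∈ K, ⟪u, a⟫ ≤ c) : u ∈ polarCone C := fun _ hy =>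
  inner_nonpos_of_forall_frontier (by rwa [finrank_euclideanSpace_fin]) hC.1 hC.2.2.2.1
    (fun _ hz => hK.inner_nonpos_of_frontier hC hc hz) hy

lemma add_mem (hd : 2 ≤ d) (hC : IsPCCCone C) (hK : CAsymptotic C K) {k : EuclideanSpace ℝ (Fin d)}
    (hk : k ∈ K) (hy : y ∈ C) : k + y ∈ K := by
  by_contra hky
  obtain ⟨f, c, hfK, hfc⟩ := geometric_hahn_banach_closed_point hK.2.2.1 hK.2.1 hky
  set u := (InnerProductSpace.toDual ℝ _).symm f
  have hu : ∀ z, ⟪u, z⟫ = f z := fun z => InnerProductSpace.toDual_symm_apply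
  have hyu := hK.mem_polarCone_of_bddAbove hd hC (c := c) (fun a ha => hu a ▸ (hfK a ha).le) y hy
  rw [map_add, ← hu y] at hfc
  linarith [hfK k hk]

lemma interior_nonempty (hd : 2 ≤ d) (hC : IsPCCCone C) (hK : CAsymptotic C K) :
    (interior K).Nonempty := by
  obtain ⟨k, hk⟩ := hK.1
  obtain ⟨z, hz⟩ := hC.2.2.2.2
  refine ⟨k + z, mem_interior.2
    ⟨k +ᵥ interior C, ?_, isOpen_interior.vadd k, vadd_mem_vadd_set hz⟩⟩
  rintro _ ⟨w, hw, rfl⟩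
  exact hK.add_mem hd hC hk (interior_subset hw)

lemma exists_normal (hd : 2 ≤ d) (hC : IsPCCCone C) (hK : CAsymptotic C K)
    (hx : x ∈ frontier K) : ∃ u ≠ 0, ∀ a ∈ K, ⟪u, a⟫ ≤ ⟪u, x⟫ := by
  obtain ⟨f, hf0, hf⟩ := geometric_hahn_banach_of_nonempty_interior_point hK.2.2.1 hx.2
    (hK.interior_nonempty hd hC)
  exact ⟨(InnerProductSpace.toDual ℝ _).symm f, by simpa using hf0,
    fun a ha => by simpa [InnerProductSpace.toDual_symm_apply] using hf a ha⟩

lemma normal_mem_omegaC (hd : 2 ≤ d) (hC : IsPCCCone C) (hK : CAsymptotic C K)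
    (hx : x ∈ interior C) (hu0 : u ≠ 0) (hu : ∀ a ∈ K, ⟪u, a⟫ ≤ ⟪u, x⟫) :
    ‖u‖⁻¹ • u ∈ omegaC C := by
  have hpol : u ∈ polarCone C := hK.mem_polarCone_of_bddAbove hd hC hu
  have hneg : ∀ y ∈ C, y ≠ 0 → ⟪u, y⟫ < 0 := fun y hy hy0 => by
    by_cases hyi : y ∈ interior C
    · exact inner_neg_of_mem_polarCone_of_mem_interior hpol hu0 hyi
    · exact hK.inner_neg_of_frontier hC hu (inner_neg_of_mem_polarCone_of_mem_interior hpol hu0 hx)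
        ⟨subset_closure hy, hyi⟩ hy0
  refine ⟨by simp [norm_smul, hu0], mem_interior_polarCone_of_inner_neg hC.2.2.1 hC.1
    fun y hy hy0 => ?_⟩
  rw [real_inner_smul_left]
  exact mul_neg_of_pos_of_neg (by positivity) (hneg y hy hy0)

lemma exists_smul_mem_revSphImage (hd : 2 ≤ d) (hC : IsPCCCone C) (hK : CAsymptotic C K)
    (h0 : (0 : EuclideanSpace ℝ (Fin d)) ∉ K) {w : EuclideanSpace ℝ (Fin d)}
    (hw : w ∈ interior C) : ∃ s : ℝ, 0 < s ∧ s • w ∈ revSphImage K (omegaC C) := by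
  obtain ⟨k, hk⟩ := hK.1
  obtain ⟨t, htC, ht⟩ : ∃ t : ℝ, w - t⁻¹ • k ∈ C ∧ 0 < t := by
    have hlim : Tendsto (fun t : ℝ => w - t⁻¹ • k) atTop (𝓝 w) := by
      simpa using tendsto_const_nhds.sub ((tendsto_inv_atTop_zero (𝕜 := ℝ)).smul_const k)
    exact ((hlim.eventually (mem_interior_iff_mem_nhds.1 hw)).and (eventually_gt_atTop 0)).exists
  have htK : t • w ∈ K := by
    have := hK.add_mem hd hC hk (hC.2.2.1 _ htC t ht.le)
    rwa [smul_sub, smul_inv_smul₀ ht.ne', add_sub_cancel] at this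
  have hray : IsPreconnected ((fun s : ℝ => s • w) '' Icc 0 t) :=
    isPreconnected_Icc.image _ (by fun_prop)
  obtain ⟨_, ⟨s, hs, rfl⟩, hsK⟩ := hray.inter_frontier_nonempty
    ⟨t • w, ⟨t, ⟨ht.le, le_rfl⟩, rfl⟩, htK⟩ ⟨0, ⟨0, ⟨le_rfl, ht.le⟩, zero_smul _ _⟩, h0⟩
  have hs0 : 0 < s := hs.1.lt_of_ne fun h => h0 (by simpa [← h] using hK.2.1.frontier_subset hsK)
  obtain ⟨u, hu0, hu⟩ := hK.exists_normal hd hC hsK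
  refine ⟨s, hs0, hsK, _, hK.normal_mem_omegaC hd hC (hC.smul_mem_interior hs0 hw) hu0 hu,
    fun a ha => ?_⟩
  simp only [real_inner_smul_left]
  exact mul_le_mul_of_nonneg_left (hu a ha) (by positivity)

end CAsymptotic

theorem inradius_bound_general (d : ℕ) (hd : 2 ≤ d)
    (C : Set (EuclideanSpace ℝ (Fin d))) (hC : IsPCCCone C)
    (K : Set (EuclideanSpace ℝ (Fin d))) (hK : CAsymptotic C K)
    (b : ℝ≥0∞) (hS : surfMeas K (omegaC C) ≤ b) :
    ENNReal.ofReal (Metric.infDist 0 K ^ (d - 1)) *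
      μH[(d : ℝ) - 1] (Metric.sphere (0 : EuclideanSpace ℝ (Fin d)) 1 ∩ interior C) ≤ b := by
  set r := infDist 0 K
  obtain hr0 | hr := (infDist_nonneg : 0 ≤ r).eq_or_lt
  · rw [← show 0 = r from hr0, zero_pow (by omega), ENNReal.ofReal_zero, zero_mul]
    exact zero_le
  have h0K : (0 : EuclideanSpace ℝ (Fin d)) ∉ K := fun h => hr.ne' (infDist_zero_of_mem h)
  have hτ : revSphImage K (omegaC C) ⊆ {x | r ≤ ‖x‖} := fun x hx => by
    simpa using infDist_le_dist_of_mem (hK.2.1.frontier_subset hx.1) (x := 0)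
  have himg : r • (sphere 0 1 ∩ interior C) ⊆
      (fun x => (r / ‖x‖) • x) '' revSphImage K (omegaC C) := by
    rintro _ ⟨w, ⟨hw1, hw⟩, rfl⟩
    obtain ⟨s, hs, hsτ⟩ := hK.exists_smul_mem_revSphImage hd hC h0K hw
    refine ⟨s • w, hsτ, ?_⟩
    rw [mem_sphere_zero_iff_norm] at hw1
    simp only [norm_smul, hw1, Real.norm_of_nonneg hs.le, mul_one, smul_smul,
      div_mul_cancel₀ r hs.ne']
  have hdim : (d : ℝ) - 1 = ((d - 1 : ℕ) : ℝ) := by rw [Nat.cast_sub (by omega), Nat.cast_one]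
  calc ENNReal.ofReal (r ^ (d - 1)) * μH[(d : ℝ) - 1] (sphere 0 1 ∩ interior C)
      = μH[(d : ℝ) - 1] (r • (sphere 0 1 ∩ interior C)) := by
        rw [hdim, hausdorffMeasure_smul_of_pos hr]
    _ ≤ μH[(d : ℝ) - 1] ((fun x => (r / ‖x‖) • x) '' revSphImage K (omegaC C)) :=
        measure_mono himg
    _ ≤ μH[(d : ℝ) - 1] (revSphImage K (omegaC C)) := by
        simpa using ((lipschitzOnWith_div_norm_smul hr).mono hτ).hausdorffMeasure_image_le
          (by rw [hdim]; positivity)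
    _ ≤ b := hS

/-- **Lemma 2.0, inequality (2.b).** If `K` is `C`-asymptotic with `S_{d-1}(K, Ω_C) ≤ b < ∞`
and `r = dist(o, K)`, then `r^{d-1} · H^{d-1}(S^{d-1} ∩ int C) ≤ b`. -/
theorem inradius_bound (d : ℕ) (hd : 2 ≤ d)
    (C : Set (EuclideanSpace ℝ (Fin d))) (hC : IsPCCCone C)
    (K : Set (EuclideanSpace ℝ (Fin d))) (hK : CAsymptotic C K)
    (b : ℝ≥0∞) (hb : b < ⊤) (hS : surfMeas K (omegaC C) ≤ b) :
    ENNReal.ofReal (Metric.infDist 0 K ^ (d - 1)) *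
      μH[(d : ℝ) - 1] (Metric.sphere (0 : EuclideanSpace ℝ (Fin d)) 1 ∩ interior C) ≤ b :=
  inradius_bound_general d hd C hC K hK b hS

end
end

section
/- Let K be a C-asymptotic set and let ω be a compact subset of Ω_C. Then the reverse spherical image τ(K,ω) is a bounded subset of ℝ^d, and consequently S_{d-1}(K,ω) < ∞. -/
open scoped RealInnerProductSpace ENNReal NNReal
open MeasureTheory Metric Set

noncomputable section

variable {d : ℕ}

/-!
Since `ω` is a compact subset of `int C°`, there is `c > 0` with `⟪u, y⟫ ≤ -c ‖y‖` for all
`u ∈ ω` and `y ∈ C`. If `u ∈ ω` is an outer normal of `K` at `x`, comparing with a fixed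
`y₀ ∈ K` gives `-‖y₀‖ ≤ ⟪u, y₀⟫ ≤ ⟪u, x⟫ ≤ -c ‖x‖`, so `‖x‖ ≤ ‖y₀‖ / c`.

For finiteness, pick a unit vector `e` with `⟪e, u⟫ ≥ c` on `ω` (the direction of `-q` for
some `q ∈ C ∖ {0}`). The normal ray `x + t u` from `x ∈ τ(K, ω)` meets a fixed
hyperplane orthogonal to `e` at a bounded parameter `t`, and the metric projection onto `K`, which
is `1`-Lipschitz, maps that point back to `x`. So `τ(K, ω)` is a `1`-Lipschitz image of a bounded
piece of a hyperplane, whose `(d-1)`-dimensional Hausdorff measure is finite.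
-/

open Module

section MetricProjection

variable {F : Type*} [NormedAddCommGroup F] [InnerProductSpace ℝ F]

theorem norm_sub_le_norm_sub_of_inner_le_zero {z w p q : F}
    (hp : ⟪z - p, q - p⟫ ≤ 0) (hq : ⟪w - q, p - q⟫ ≤ 0) : ‖p - q‖ ≤ ‖z - w‖ := by
  have hpq : ‖p - q‖ ^ 2 ≤ ⟪z - w, p - q⟫ := by
    have hp' : 0 ≤ ⟪z - p, p - q⟫ := by
      rw [← neg_sub q p, inner_neg_right]; linarith
    have hsplit : z - w = (z - p) - (w - q) + (p - q) := by abel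
    rw [hsplit, inner_add_left, inner_sub_left, real_inner_self_eq_norm_sq]
    linarith
  have hcs : ⟪z - w, p - q⟫ ≤ ‖z - w‖ * ‖p - q‖ := real_inner_le_norm _ _
  nlinarith [norm_nonneg (p - q), norm_nonneg (z - w)]

/-- The nearest-point map onto `K`, through its variational characterization
(`norm_eq_iInf_iff_real_inner_le_zero`). -/
def IsMetricProjection (K : Set F) (P : F → F) : Prop :=
  ∀ z, P z ∈ K ∧ ∀ y ∈ K, ⟪z - P z, y - P z⟫ ≤ 0

theorem exists_isMetricProjection {K : Set F} (hne : K.Nonempty) (hK : IsComplete K)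
    (hconv : Convex ℝ K) : ∃ P, IsMetricProjection K P := by
  choose P hPK hP using fun z => exists_norm_eq_iInf_of_complete_convex hne hK hconv z
  exact ⟨P, fun z => ⟨hPK z, (norm_eq_iInf_iff_real_inner_le_zero hconv (hPK z)).mp (hP z)⟩⟩

namespace IsMetricProjection

variable {K : Set F} {P : F → F}

theorem lipschitzWith_one (hP : IsMetricProjection K P) : LipschitzWith 1 P :=
  LipschitzWith.of_dist_le_mul fun z w => by
    rw [NNReal.coe_one, one_mul, dist_eq_norm, dist_eq_norm]
    exact norm_sub_le_norm_sub_of_inner_le_zero ((hP z).2 _ (hP w).1) ((hP w).2 _ (hP z).1)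

theorem apply_add_smul_eq (hP : IsMetricProjection K P) {x u : F} {t : ℝ} (hx : x ∈ K)
    (hxu : ∀ y ∈ K, ⟪u, y⟫ ≤ ⟪u, x⟫) (ht : 0 ≤ t) : P (x + t • u) = x := by
  have hnormal : ⟪x + t • u - x, P (x + t • u) - x⟫ ≤ 0 := by
    rw [add_sub_cancel_left, real_inner_smul_left, inner_sub_right]
    exact mul_nonpos_of_nonneg_of_nonpos ht (sub_nonpos.mpr (hxu _ (hP _).1))
  have h := norm_sub_le_norm_sub_of_inner_le_zero ((hP (x + t • u)).2 x hx) hnormal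
  rwa [sub_self, norm_zero, norm_le_zero_iff, sub_eq_zero] at h

/-- The preimage is the point where the normal ray `x + t • u` meets the hyperplane. -/
theorem mem_image_hyperplane_inter_closedBall (hP : IsMetricProjection K P) {x u e : F}
    {c R : ℝ} (hx : x ∈ K) (hxR : ‖x‖ ≤ R) (hxu : ∀ y ∈ K, ⟪u, y⟫ ≤ ⟪u, x⟫) (hu : ‖u‖ ≤ 1)
    (he : ‖e‖ = 1) (hc : 0 < c) (hcu : c ≤ ⟪e, u⟫) :
    x ∈ P '' ({z | ⟪e, z⟫ = R} ∩ closedBall 0 (R + 2 * R / c)) := by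
  have hexR : |⟪e, x⟫| ≤ R :=
    (abs_real_inner_le_norm e x).trans (by rw [he, one_mul]; exact hxR)
  have heu : 0 < ⟪e, u⟫ := hc.trans_le hcu
  set t := (R - ⟪e, x⟫) / ⟪e, u⟫
  have ht : 0 ≤ t := div_nonneg (by linarith [le_abs_self ⟪e, x⟫]) heu.le
  have htR : t ≤ 2 * R / c :=
    div_le_div₀ (by linarith [abs_nonneg ⟪e, x⟫]) (by linarith [neg_abs_le ⟪e, x⟫]) hc hcu
  refine ⟨x + t • u, ⟨?_, ?_⟩, hP.apply_add_smul_eq hx hxu ht⟩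
  · change ⟪e, x + t • u⟫ = R
    rw [inner_add_right, real_inner_smul_right, div_mul_cancel₀ _ heu.ne']
    ring
  · rw [mem_closedBall_zero_iff]
    calc ‖x + t • u‖ ≤ ‖x‖ + t * ‖u‖ :=
          (norm_add_le _ _).trans_eq (by rw [norm_smul, Real.norm_of_nonneg ht])
      _ ≤ R + 2 * R / c := by nlinarith [norm_nonneg u]

end IsMetricProjection

end MetricProjection

section HausdorffMeasure

theorem hausdorffMeasure_finrank_lt_top {E : Type*} [NormedAddCommGroup E] [NormedSpace ℝ E]
    [FiniteDimensional ℝ E] [MeasurableSpace E] [BorelSpace E] {s : Set E}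
    (hs : Bornology.IsBounded s) : μH[finrank ℝ E] s < ⊤ := by
  have hHE : μHE[finrank ℝ E] s < ⊤ := hs.measure_lt_top
  rw [Measure.euclideanHausdorffMeasure_def, Measure.smul_apply, ENNReal.smul_def,
    smul_eq_mul] at hHE
  exact ENNReal.lt_top_of_mul_ne_top_right hHE.ne
    (by simpa using Measure.addHaarScalarFactor_volume_hausdorffMeasure_ne_zero _)

variable {F : Type*} [NormedAddCommGroup F] [InnerProductSpace ℝ F] [FiniteDimensional ℝ F]
  [MeasurableSpace F] [BorelSpace F]

/-- `s` is a translate of a bounded subset of `(ℝ ∙ e)ᗮ`, whose dimension is `finrank ℝ F - 1`. -/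
theorem hausdorffMeasure_lt_top_of_subset_hyperplane {e : F} (he : e ≠ 0) {b : ℝ} {s : Set F}
    (hs : Bornology.IsBounded s) (hse : s ⊆ {z | ⟪e, z⟫ = b}) :
    μH[(finrank ℝ F - 1 : ℕ)] s < ⊤ := by
  have hW : finrank ℝ (ℝ ∙ e)ᗮ = finrank ℝ F - 1 := by
    have := (ℝ ∙ e).finrank_add_finrank_orthogonal
    rw [finrank_span_singleton he] at this
    omega
  set v := (b / ‖e‖ ^ 2) • e
  have hv : ⟪e, v⟫ = b := by
    rw [real_inner_smul_right, real_inner_self_eq_norm_sq,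
      div_mul_cancel₀ _ (pow_ne_zero 2 (norm_ne_zero_iff.mpr he))]
  let f : (ℝ ∙ e)ᗮ → F := fun w => v + w
  have hf : Isometry f := (IsometryEquiv.addLeft v).isometry.comp isometry_subtype_coe
  have hsf : s ⊆ f '' (f ⁻¹' s) := fun z hz => by
    refine ⟨⟨z - v, ?_⟩, by simpa [f] using hz, by simp [f]⟩
    rw [Submodule.mem_orthogonal_singleton_iff_inner_right, inner_sub_right, hse hz, hv, sub_self]
  calc μH[(finrank ℝ F - 1 : ℕ)] s ≤ μH[(finrank ℝ F - 1 : ℕ)] (f '' (f ⁻¹' s)) :=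
        measure_mono hsf
    _ = μH[finrank ℝ (ℝ ∙ e)ᗮ] (f ⁻¹' s) := by
        rw [hf.hausdorffMeasure_image (Or.inl (Nat.cast_nonneg _)), hW]
    _ < ⊤ := hausdorffMeasure_finrank_lt_top (hf.antilipschitz.isBounded_preimage hs)

end HausdorffMeasure

theorem exists_mem_ne_zero_of_interior_nonempty {F : Type*} [NormedAddCommGroup F]
    [NormedSpace ℝ F] [Nontrivial F] {C : Set F} (hC : (interior C).Nonempty) :
    ∃ q ∈ C, q ≠ 0 := by
  by_contra! h
  have hC0 : interior C ⊆ interior {0} := interior_mono fun q hq => h q hq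
  rw [interior_singleton] at hC0
  exact hC.ne_empty (subset_empty_iff.mp hC0)

section PolarCone

variable {C K ω : Set (EuclideanSpace ℝ (Fin d))}

/-- By compactness, `C°` contains the closed balls of some radius `c` around the points of `ω`;
test `u + (c / ‖y‖) • y ∈ C°` against `y`. -/
theorem exists_pos_forall_inner_le_neg_mul_norm (hω : IsCompact ω)
    (hωC : ω ⊆ interior (polarCone C)) :
    ∃ c > 0, ∀ u ∈ ω, ∀ y ∈ C, ⟪u, y⟫ ≤ -(c * ‖y‖) := by
  obtain ⟨c, hc, hcω⟩ := hω.exists_cthickening_subset_open isOpen_interior hωC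
  refine ⟨c, hc, fun u hu y hyC => ?_⟩
  rcases eq_or_ne y 0 with rfl | hy0
  · simp
  have hy : 0 < ‖y‖ := norm_pos_iff.mpr hy0
  have hmem : u + (c / ‖y‖) • y ∈ polarCone C := by
    refine interior_subset (hcω (closedBall_subset_cthickening hu c ?_))
    rw [mem_closedBall, dist_eq_norm, add_sub_cancel_left, norm_smul, Real.norm_of_nonneg
      (div_nonneg hc.le hy.le), div_mul_cancel₀ _ hy.ne']
  have h := hmem y hyC
  rw [inner_add_left, real_inner_smul_left, real_inner_self_eq_norm_sq] at h
  have : c / ‖y‖ * ‖y‖ ^ 2 = c * ‖y‖ := by field_simp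
  linarith

theorem exists_norm_eq_one_forall_le_inner {c : ℝ} {q : EuclideanSpace ℝ (Fin d)} (hqC : q ∈ C)
    (hq0 : q ≠ 0) (hc : ∀ u ∈ ω, ∀ y ∈ C, ⟪u, y⟫ ≤ -(c * ‖y‖)) :
    ∃ e : EuclideanSpace ℝ (Fin d), ‖e‖ = 1 ∧ ∀ u ∈ ω, c ≤ ⟪e, u⟫ := by
  have hq : 0 < ‖q‖ := norm_pos_iff.mpr hq0
  refine ⟨-(‖q‖⁻¹ • q), by rw [norm_neg, norm_smul, norm_inv, norm_norm, inv_mul_cancel₀ hq.ne'],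
    fun u hu => ?_⟩
  rw [inner_neg_left, real_inner_smul_left, real_inner_comm, le_neg, ← div_eq_inv_mul,
    div_le_iff₀ hq]
  linarith [hc u hu q hqC]

theorem revSphImage_subset_closedBall {c : ℝ} {y₀ : EuclideanSpace ℝ (Fin d)} (hK : IsClosed K)
    (hy₀ : y₀ ∈ K) (hω : ω ⊆ closedBall 0 1) (hc : 0 < c)
    (hcK : ∀ u ∈ ω, ∀ y ∈ K, ⟪u, y⟫ ≤ -(c * ‖y‖)) :
    revSphImage K ω ⊆ closedBall 0 (‖y₀‖ / c) := by
  rintro x ⟨hxf, u, hu, hxu⟩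
  have hxK : x ∈ K := hK.frontier_subset hxf
  have hu1 : ‖u‖ ≤ 1 := mem_closedBall_zero_iff.mp (hω hu)
  have hy₀u : -‖y₀‖ ≤ ⟪u, y₀⟫ := by
    have := neg_le_of_abs_le (abs_real_inner_le_norm u y₀)
    nlinarith [norm_nonneg y₀]
  rw [mem_closedBall_zero_iff, le_div_iff₀ hc]
  linarith [hxu y₀ hy₀, hcK u hu x hxK]

theorem hausdorffMeasure_revSphImage_lt_top {c R : ℝ} {e : EuclideanSpace ℝ (Fin d)}
    (hK : IsClosed K) (hKne : K.Nonempty) (hKconv : Convex ℝ K) (hω : ω ⊆ closedBall 0 1)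
    (hc : 0 < c) (he : ‖e‖ = 1) (hce : ∀ u ∈ ω, c ≤ ⟪e, u⟫)
    (hR : revSphImage K ω ⊆ closedBall 0 R) :
    μH[(finrank ℝ (EuclideanSpace ℝ (Fin d)) - 1 : ℕ)] (revSphImage K ω) < ⊤ := by
  obtain ⟨P, hP⟩ := exists_isMetricProjection hKne hK.isComplete hKconv
  set H := {z | ⟪e, z⟫ = R} ∩ closedBall 0 (R + 2 * R / c)
  have hcover : revSphImage K ω ⊆ P '' H := by
    rintro x ⟨hxf, u, hu, hxu⟩
    exact hP.mem_image_hyperplane_inter_closedBall (hK.frontier_subset hxf)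
      (mem_closedBall_zero_iff.mp (hR ⟨hxf, u, hu, hxu⟩)) hxu
      (mem_closedBall_zero_iff.mp (hω hu)) he hc (hce u hu)
  calc _ ≤ μH[(finrank ℝ (EuclideanSpace ℝ (Fin d)) - 1 : ℕ)] (P '' H) := measure_mono hcover
    _ ≤ 1 ^ ((finrank ℝ (EuclideanSpace ℝ (Fin d)) - 1 : ℕ) : ℝ) *
        μH[(finrank ℝ (EuclideanSpace ℝ (Fin d)) - 1 : ℕ)] H :=
      hP.lipschitzWith_one.hausdorffMeasure_image_le (Nat.cast_nonneg _) H
    _ < ⊤ := by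
      rw [ENNReal.one_rpow, one_mul]
      exact hausdorffMeasure_lt_top_of_subset_hyperplane (norm_ne_zero_iff.mp (by simp [he]))
        (isBounded_closedBall.subset inter_subset_right) inter_subset_left

end PolarCone

/-- The reverse spherical image of a `C`-asymptotic set at a compact subset of `Ω_C` is bounded;
consequently the surface area measure of a compact set is finite. -/
theorem revSphImage_bounded_and_surfMeas_finite (d : ℕ) (hd : 2 ≤ d)
    (C : Set (EuclideanSpace ℝ (Fin d))) (hC : IsPCCCone C)
    (K : Set (EuclideanSpace ℝ (Fin d))) (hK : CAsymptotic C K)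
    (ω : Set (EuclideanSpace ℝ (Fin d))) (hωcpt : IsCompact ω) (hωsub : ω ⊆ omegaC C) :
    Bornology.IsBounded (revSphImage K ω) ∧ surfMeas K ω < ⊤ := by
  obtain ⟨-, -, -, -, hCint⟩ := hC
  obtain ⟨⟨y₀, hy₀⟩, hKcl, hKconv, hKC, -⟩ := hK
  have : Nontrivial (EuclideanSpace ℝ (Fin d)) := by
    have : Nonempty (Fin d) := ⟨⟨0, by omega⟩⟩
    infer_instance
  obtain ⟨c, hc, hcC⟩ := exists_pos_forall_inner_le_neg_mul_norm hωcpt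
    (hωsub.trans inter_subset_right)
  have hω1 : ω ⊆ closedBall 0 1 := hωsub.trans (inter_subset_left.trans sphere_subset_closedBall)
  have hbdd := revSphImage_subset_closedBall hKcl hy₀ hω1 hc fun u hu y hy => hcC u hu y (hKC hy)
  refine ⟨isBounded_closedBall.subset hbdd, ?_⟩
  obtain ⟨q, hqC, hq0⟩ := exists_mem_ne_zero_of_interior_nonempty hCint
  obtain ⟨e, he, hce⟩ := exists_norm_eq_one_forall_le_inner hqC hq0 hcC
  have hdim : (d : ℝ) - 1 = ((finrank ℝ (EuclideanSpace ℝ (Fin d)) - 1 : ℕ) : ℝ) := by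
    rw [finrank_euclideanSpace_fin, Nat.cast_sub (by omega), Nat.cast_one]
  rw [surfMeas, hdim]
  exact hausdorffMeasure_revSphImage_lt_top hKcl ⟨y₀, hy₀⟩ hKconv hω1 hc he hce hbdd
end
end

section
/- Let d = 3 and let C ⊂ ℝ³ be the positive orthant, i.e., the set of vectors with all coordinates nonnegative. Then there exists a C-close set K (namely the closed convex hull of the points p_n = (1/n², 0, n−1), q_n = (0, 1/n², n−1) for n ∈ ℕ together with the rays {(x,0,0) : x ≥ 1} and {(0,x,0) : x ≥ 1}) such that S_2(K, Ω_C) < ∞ but C \ K is unbounded. In particular, a C-close set with finite total surface area measure need not be C-full. -/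
open scoped RealInnerProductSpace ENNReal NNReal
open MeasureTheory Metric Set

noncomputable section

variable {d : ℕ}

/-!
Over a height `z ∈ [n - 1, n]` the slice of `K` is `{x ∈ C | x₀ + x₁ ≥ ℓ(z)}`, where `ℓ`
interpolates linearly between the widths `1/n²` and `1/(n+1)²` of `p_n, q_n` and `p_{n+1}, q_{n+1}`;
the rays make every slice upward closed in `x₀` and `x₁`, and convexity of `x ↦ 1/x²` makes each
interpolating line a supporting halfspace of `K`. Hence `C \ K` lies in the boxes
`[0, 1/n²]² × [n - 1, n]`, of total volume `∑ 1/n⁴ < ∞`, yet contains the whole `x₂`-axis; and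
the boundary points with an outer normal in `Ω_C` (all coordinates negative) lie on the planar
pieces `x₀ + x₁ = ℓ(x₂)`, whose total area is `O(∑ 1/n²) < ∞`.
-/

open Filter Topology

theorem Convex.add_smul_mem_of_smul_mem {E : Type*} [AddCommGroup E] [Module ℝ E]
    [TopologicalSpace E] [ContinuousAdd E] [ContinuousSMul ℝ E] {K : Set E}
    (hconv : Convex ℝ K) (hclosed : IsClosed K) {x v : E} (hx : x ∈ K)
    (hv : ∀ t : ℝ, 1 ≤ t → t • v ∈ K) {s : ℝ} (hs : 0 ≤ s) : x + s • v ∈ K := by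
  rcases hs.eq_or_lt with rfl | hs
  · simpa using hx
  -- `(1 - λ) • x + λ • ((s / λ) • v)` lies in `K` for small `λ > 0` and tends to `x + s • v`.
  have hlim : Tendsto (fun l : ℝ => (1 - l) • x + s • v) (𝓝[>] 0) (𝓝 (x + s • v)) := by
    have : Continuous fun l : ℝ => (1 - l) • x + s • v := by fun_prop
    simpa using this.continuousWithinAt.tendsto (x := 0) (s := Ioi 0)
  refine hclosed.mem_of_tendsto hlim ?_
  filter_upwards [Ioo_mem_nhdsGT (lt_min one_pos hs)] with l ⟨hl0, hl⟩
  have hcomb := hconv hx (hv (s / l) ((one_le_div hl0).2 (hl.trans_le (min_le_right _ _)).le))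
    (by linarith [min_le_left 1 s]) hl0.le (sub_add_cancel 1 l)
  rwa [smul_smul, mul_div_cancel₀ _ hl0.ne'] at hcomb

theorem inner_lt_zero_of_mem_interior_polarCone {C : Set (EuclideanSpace ℝ (Fin d))}
    {u y : EuclideanSpace ℝ (Fin d)} (hu : u ∈ interior (polarCone C)) (hy : y ∈ C)
    (hy0 : y ≠ 0) : ⟪u, y⟫ < 0 := by
  have hlim : Tendsto (fun t : ℝ => u + t • y) (𝓝[>] 0) (𝓝 u) := by
    have : Continuous fun t : ℝ => u + t • y := by fun_prop
    simpa using this.continuousWithinAt.tendsto (x := 0) (s := Ioi 0)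
  obtain ⟨t, ht, ht0⟩ := ((hlim.eventually_mem (mem_interior_iff_mem_nhds.1 hu)).and
    self_mem_nhdsWithin).exists
  have := ht y hy
  rw [inner_add_left, real_inner_smul_left, real_inner_self_eq_norm_sq] at this
  have : 0 < ‖y‖ ^ 2 := by positivity
  nlinarith

theorem measure_lt_top_of_subset_iUnion {α : Type*} [MeasurableSpace α] {μ : Measure α}
    {s : Set α} {t : ℕ → Set α} {c : ℕ → ℝ} (hst : s ⊆ ⋃ n, t n)
    (ht : ∀ n, μ (t n) ≤ ENNReal.ofReal (c n)) (hc0 : ∀ n, 0 ≤ c n) (hc : Summable c) :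
    μ s < ⊤ :=
  calc μ s ≤ ∑' n, μ (t n) := (measure_mono hst).trans (measure_iUnion_le t)
    _ ≤ ∑' n, ENNReal.ofReal (c n) := ENNReal.tsum_le_tsum ht
    _ = ENNReal.ofReal (∑' n, c n) := (ENNReal.ofReal_tsum_of_nonneg hc0 hc).symm
    _ < ⊤ := ENNReal.ofReal_lt_top

theorem inv_sq_add_secant_le {n x : ℝ} (hn : 0 < n) (hx : 0 < x)
    (hout : 0 ≤ (x - n) * (x - (n + 1))) :
    1 / n ^ 2 + (1 / (n + 1) ^ 2 - 1 / n ^ 2) * (x - n) ≤ 1 / x ^ 2 := by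
  -- Clearing denominators, the gap is `(x - n) (x - n - 1) ((2n + 1) x + n (n + 1))`.
  have key : 1 / x ^ 2 - (1 / n ^ 2 + (1 / (n + 1) ^ 2 - 1 / n ^ 2) * (x - n)) =
      (x - n) * (x - (n + 1)) * ((2 * n + 1) * x + n * (n + 1)) / (x ^ 2 * n ^ 2 * (n + 1) ^ 2) := by
    field_simp
    ring
  have : 0 ≤ (x - n) * (x - (n + 1)) * ((2 * n + 1) * x + n * (n + 1)) /
      (x ^ 2 * n ^ 2 * (n + 1) ^ 2) := by positivity
  linarith

namespace OrthantExample

abbrev E3 := EuclideanSpace ℝ (Fin 3)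

def width (n : ℕ) : ℝ := 1 / (n : ℝ) ^ 2

def C : Set E3 := {x | ∀ i, 0 ≤ x i}

def A : Set E3 :=
  {p | ∃ n : ℕ, 1 ≤ n ∧ (p = !₂[width n, 0, (n : ℝ) - 1] ∨ p = !₂[0, width n, (n : ℝ) - 1])} ∪
    {p | ∃ t : ℝ, 1 ≤ t ∧ (p = !₂[t, 0, 0] ∨ p = !₂[0, t, 0])}

def K : Set E3 := closure (convexHull ℝ A)

/-- The profile `ℓ` of the slices of `K` at heights `z ∈ [n - 1, n]`. -/
def secant (n : ℕ) (z : ℝ) : ℝ := width n + (width (n + 1) - width n) * (z + 1 - n)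

lemma width_pos {n : ℕ} (hn : 1 ≤ n) : 0 < width n := by
  have : (0 : ℝ) < n := by exact_mod_cast hn
  unfold width; positivity

lemma width_nonneg (n : ℕ) : 0 ≤ width n := by
  unfold width; positivity

lemma width_succ_le {n : ℕ} (hn : 1 ≤ n) : width (n + 1) ≤ width n := by
  have : (1 : ℝ) ≤ n := by exact_mod_cast hn
  unfold width
  gcongr
  simp

lemma width_le_one (n : ℕ) : width n ≤ 1 := by
  rcases Nat.eq_zero_or_pos n with rfl | hn
  · simp [width]
  · have : (1 : ℝ) ≤ n := by exact_mod_cast hn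
    unfold width
    rw [div_le_one (by positivity)]
    nlinarith

lemma secant_le_width {n m : ℕ} (hn : 1 ≤ n) (hm : 1 ≤ m) : secant n (m - 1) ≤ width m := by
  have hout : 0 ≤ ((m : ℝ) - n) * (m - (n + 1)) := by
    rcases le_or_gt m n with h | h
    · have : (m : ℝ) ≤ n := by exact_mod_cast h
      nlinarith
    · have : (n : ℝ) + 1 ≤ m := by exact_mod_cast h
      nlinarith
  have := inv_sq_add_secant_le (n := n) (x := m) (by positivity) (by positivity) hout
  simp only [secant, width]
  push_cast
  convert this using 2
  ring

lemma secant_pos {n : ℕ} (hn : 1 ≤ n) {z : ℝ} (hz : z ≤ n) :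
    0 < secant n z := by
  have := width_pos (n := n + 1) (by omega)
  have := width_succ_le hn
  unfold secant
  nlinarith

lemma secant_le {n : ℕ} (hn : 1 ≤ n) {z : ℝ} (hz₁ : (n : ℝ) - 1 ≤ z) :
    secant n z ≤ width n := by
  have := width_succ_le hn
  unfold secant
  nlinarith

lemma exists_nat_sub_one_le_le (z : ℝ) (hz : 0 ≤ z) :
    ∃ n : ℕ, 1 ≤ n ∧ (n : ℝ) - 1 ≤ z ∧ z ≤ n :=
  ⟨⌊z⌋₊ + 1, by omega, by push_cast; linarith [Nat.floor_le hz],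
    by push_cast; linarith [Nat.lt_floor_add_one z]⟩

lemma isClosed_C : IsClosed C := by
  simp only [C, ofPred_forall]
  exact isClosed_iInter fun i => isClosed_le continuous_const (by fun_prop)

lemma convex_C : Convex ℝ C := by
  intro x hx y hy a b ha hb _ i
  have := hx i
  have := hy i
  simp only [PiLp.add_apply, PiLp.smul_apply, smul_eq_mul]
  positivity

lemma A_subset_C : A ⊆ C := by
  have hw := width_nonneg
  rintro p (⟨m, hm, rfl | rfl⟩ | ⟨t, ht, rfl | rfl⟩) i <;>
    fin_cases i <;> simp [hw] <;> first | exact_mod_cast hm | linarith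

lemma K_subset_C : K ⊆ C :=
  closure_minimal (convexHull_min A_subset_C convex_C) isClosed_C

lemma convex_K : Convex ℝ K := (convex_convexHull ℝ A).closure

lemma subset_K : A ⊆ K := (subset_convexHull ℝ A).trans subset_closure

lemma K_subset_secant_le {n : ℕ} (hn : 1 ≤ n) : K ⊆ {v | secant n (v 2) ≤ v 0 + v 1} := by
  have hclosed : IsClosed {v : E3 | secant n (v 2) ≤ v 0 + v 1} :=
    isClosed_le (by unfold secant; fun_prop) (by fun_prop)
  have hconv : Convex ℝ {v : E3 | secant n (v 2) ≤ v 0 + v 1} := by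
    intro x hx y hy a b ha hb hab
    simp only [mem_ofPred_eq, secant, PiLp.add_apply, PiLp.smul_apply, smul_eq_mul] at hx hy ⊢
    have hb' : b = 1 - a := by linarith
    subst hb'
    nlinarith [mul_le_mul_of_nonneg_left hx ha, mul_le_mul_of_nonneg_left hy hb]
  have hA : A ⊆ {v : E3 | secant n (v 2) ≤ v 0 + v 1} := by
    have h1 := secant_le_width hn le_rfl
    simp only [Nat.cast_one, sub_self, width, div_one, one_pow] at h1
    rintro p (⟨m, hm, rfl | rfl⟩ | ⟨t, ht, rfl | rfl⟩) <;> simp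
    · exact secant_le_width hn hm
    · exact secant_le_width hn hm
    · linarith
    · linarith
  exact closure_minimal (convexHull_min hA hconv) hclosed

lemma axis_mem_K {n : ℕ} (hn : 1 ≤ n) {z s : ℝ} (hz₁ : (n : ℝ) - 1 ≤ z)
    (hz₂ : z ≤ n) (hs : secant n z ≤ s) : !₂[s, 0, z] ∈ K ∧ !₂[0, s, z] ∈ K := by
  have hmem : ∀ x y : E3, x ∈ A → y ∈ A → (n - z) • x + (z + 1 - n) • y ∈ K := fun x y hx hy =>
    convex_K (subset_K hx) (subset_K hy) (by linarith) (by linarith) (by ring)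
  have hP := hmem _ _ (Or.inl ⟨n, hn, Or.inl rfl⟩) (Or.inl ⟨n + 1, by omega, Or.inl rfl⟩)
  have hQ := hmem _ _ (Or.inl ⟨n, hn, Or.inr rfl⟩) (Or.inl ⟨n + 1, by omega, Or.inr rfl⟩)
  constructor
  · convert Convex.add_smul_mem_of_smul_mem convex_K isClosed_closure hP
      (v := !₂[1, 0, 0]) (fun t ht => subset_K (Or.inr ⟨t, ht, Or.inl ?_⟩)) (sub_nonneg.2 hs) using 1
    · ext i; fin_cases i <;> simp [secant] <;> ring
    · ext i; fin_cases i <;> simp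
  · convert Convex.add_smul_mem_of_smul_mem convex_K isClosed_closure hQ
      (v := !₂[0, 1, 0]) (fun t ht => subset_K (Or.inr ⟨t, ht, Or.inr ?_⟩)) (sub_nonneg.2 hs) using 1
    · ext i; fin_cases i <;> simp [secant] <;> ring
    · ext i; fin_cases i <;> simp

lemma mem_K_of_secant_le {n : ℕ} (hn : 1 ≤ n) {v : E3} (hv : v ∈ C) (hz₁ : (n : ℝ) - 1 ≤ v 2)
    (hz₂ : v 2 ≤ n) (hs : secant n (v 2) ≤ v 0 + v 1) : v ∈ K := by
  have hs0 : 0 < v 0 + v 1 := (secant_pos hn hz₂).trans_le hs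
  obtain ⟨hx, hy⟩ := axis_mem_K hn hz₁ hz₂ hs
  convert convex_K hx hy (div_nonneg (hv 0) hs0.le) (div_nonneg (hv 1) hs0.le)
    (by field_simp) using 1
  ext i; fin_cases i <;> simp <;> field_simp

def box (n : ℕ) : Set E3 := WithLp.ofLp ⁻¹' Icc ![0, 0, (n : ℝ) - 1] ![width n, width n, n]

lemma C_diff_K_subset : C \ K ⊆ ⋃ n, box n := by
  rintro v ⟨hv, hvK⟩
  obtain ⟨n, hn, hz₁, hz₂⟩ := exists_nat_sub_one_le_le (v 2) (hv 2)
  have hsum : v 0 + v 1 < secant n (v 2) :=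
    not_le.1 fun hs => hvK (mem_K_of_secant_le hn hv hz₁ hz₂ hs)
  have := secant_le hn hz₁
  have := hv 0
  have := hv 1
  refine mem_iUnion.2 ⟨n, fun i => ?_, fun i => ?_⟩ <;> fin_cases i <;> simp <;> linarith

lemma volume_box (n : ℕ) : volume (box n) ≤ ENNReal.ofReal (width n ^ 2) := by
  rw [box, (PiLp.volume_preserving_ofLp (Fin 3)).measure_preimage
    measurableSet_Icc.nullMeasurableSet, Real.volume_Icc_pi, Fin.prod_univ_three]
  simp [← ENNReal.ofReal_mul (width_nonneg n), sq]

lemma volume_C_diff_K_lt_top : volume (C \ K) < ⊤ := by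
  refine measure_lt_top_of_subset_iUnion C_diff_K_subset volume_box (fun n => sq_nonneg _) ?_
  simp only [width, div_pow, one_pow, ← pow_mul]
  exact Real.summable_one_div_nat_pow.2 (by norm_num)

lemma not_isBounded_C_diff_K : ¬ Bornology.IsBounded (C \ K) := by
  rw [isBounded_iff_forall_norm_le]
  rintro ⟨R, hR⟩
  set z := max R 0 + 1
  have hz0 : 0 ≤ z := by positivity
  obtain ⟨n, hn, -, hz⟩ := exists_nat_sub_one_le_le z hz0
  have hmem : !₂[0, 0, z] ∈ C \ K := by
    refine ⟨fun i => ?_, fun hK => ?_⟩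
    · fin_cases i <;> simp [hz0]
    · have := K_subset_secant_le hn hK
      simp only [mem_ofPred_eq, Matrix.cons_val, Matrix.cons_val_zero, Matrix.cons_val_one,
        add_zero] at this
      linarith [secant_pos hn hz]
  have := (PiLp.norm_apply_le (!₂[0, 0, z] : E3) 2).trans (hR _ hmem)
  simp only [Matrix.cons_val, Real.norm_eq_abs] at this
  linarith [le_max_left R 0, le_abs_self z]

lemma add_le_secant_of_forall_inner_le {n : ℕ} (hn : 1 ≤ n) {x u : E3}
    (hu : u ∈ interior (polarCone C)) (hxK : x ∈ K) (hz₁ : (n : ℝ) - 1 ≤ x 2) (hz₂ : x 2 ≤ n)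
    (hmax : ∀ y ∈ K, ⟪u, y⟫ ≤ ⟪u, x⟫) : x 0 + x 1 ≤ secant n (x 2) := by
  by_contra! hlt
  have hx := K_subset_C hxK
  have hs0 : 0 < x 0 + x 1 := (secant_pos hn hz₂).trans hlt
  set r := secant n (x 2) / (x 0 + x 1)
  have hr : r < 1 := (div_lt_one hs0).2 hlt
  -- Shrinking the first two coordinates towards the profile stays in `K` and, as `u` is
  -- strictly negative on `C \ {0}`, increases `⟪u, ·⟫`.
  set w : E3 := !₂[x 0, x 1, 0]
  have hw : w ∈ C := fun i => by fin_cases i <;> simp [w, hx 0, hx 1]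
  have hw0 : w ≠ 0 := fun h => by
    have h0 := congrArg (· 0) h
    have h1 := congrArg (· 1) h
    simp only [Matrix.cons_val_zero, Matrix.cons_val_one, PiLp.zero_apply, w] at h0 h1
    linarith
  have hyK : x - (1 - r) • w ∈ K := by
    refine mem_K_of_secant_le hn (fun i => ?_) (by simpa [w] using hz₁) (by simpa [w] using hz₂)
      (le_of_eq ?_)
    · have : 0 ≤ r := div_nonneg (secant_pos hn hz₂).le hs0.le
      fin_cases i <;> simp [w] <;> nlinarith [hx 0, hx 1, hx 2]
    · have hrs : r * (x 0 + x 1) = secant n (x 2) := div_mul_cancel₀ _ hs0.ne'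
      simp only [PiLp.sub_apply, PiLp.smul_apply, Matrix.cons_val, smul_eq_mul, mul_zero,
        sub_zero, Matrix.cons_val_zero, Matrix.cons_val_one, w]
      linear_combination -hrs
  have := hmax _ hyK
  rw [inner_sub_right, real_inner_smul_right] at this
  nlinarith [inner_lt_zero_of_mem_interior_polarCone hu hw hw0]

def sheet (n : ℕ) (y : Fin 2 → ℝ) : E3 := !₂[secant n (y 1) - y 0, y 0, y 1]

def sheetDomain (n : ℕ) : Set (Fin 2 → ℝ) := Icc ![0, (n : ℝ) - 1] ![width n, n]

lemma revSphImage_subset : revSphImage K (omegaC C) ⊆ ⋃ n, sheet n '' sheetDomain n := by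
  rintro x ⟨hxf, u, ⟨-, hu⟩, hmax⟩
  have hxK : x ∈ K := isClosed_closure.frontier_subset hxf
  have hx := K_subset_C hxK
  obtain ⟨n, hn, hz₁, hz₂⟩ := exists_nat_sub_one_le_le (x 2) (hx 2)
  have hsec : x 0 + x 1 = secant n (x 2) :=
    (add_le_secant_of_forall_inner_le hn hu hxK hz₁ hz₂ hmax).antisymm
      (K_subset_secant_le hn hxK)
  have hx₁ : x 1 ≤ width n := by linarith [secant_le hn hz₁, hx 0]
  have hx₀ : secant n (x 2) - x 1 = x 0 := by linarith
  refine mem_iUnion.2 ⟨n, ![x 1, x 2], ⟨fun i => ?_, fun i => ?_⟩, ?_⟩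
  · fin_cases i <;> simp [hx 1, hz₁]
  · fin_cases i <;> simp [hx₁, hz₂]
  · ext i; fin_cases i <;> simp [sheet, hx₀]

lemma lipschitzWith_sheet (n : ℕ) : LipschitzWith 3 (sheet n) := by
  refine LipschitzWith.of_dist_le_mul fun y y' => ?_
  have h0 : |y 0 - y' 0| ≤ dist y y' := by rw [← Real.dist_eq]; exact dist_le_pi_dist y y' 0
  have h1 : |y 1 - y' 1| ≤ dist y y' := by rw [← Real.dist_eq]; exact dist_le_pi_dist y y' 1
  have hslope : |width (n + 1) - width n| ≤ 1 := by
    rw [abs_le]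
    constructor <;> linarith [width_nonneg n, width_nonneg (n + 1), width_le_one n,
      width_le_one (n + 1)]
  have hfirst : |secant n (y 1) - y 0 - (secant n (y' 1) - y' 0)| ≤ 2 * dist y y' := by
    have : secant n (y 1) - y 0 - (secant n (y' 1) - y' 0) =
        (width (n + 1) - width n) * (y 1 - y' 1) - (y 0 - y' 0) := by
      unfold secant; ring
    rw [this]
    calc _ ≤ |width (n + 1) - width n| * |y 1 - y' 1| + |y 0 - y' 0| := by
          rw [← abs_mul]; exact abs_sub _ _
      _ ≤ 1 * dist y y' + dist y y' := by gcongr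
      _ = 2 * dist y y' := by ring
  rw [EuclideanSpace.dist_eq, Fin.sum_univ_three, Real.sqrt_le_iff]
  simp only [sheet, Real.dist_eq, Matrix.cons_val_zero, Matrix.cons_val_one, Matrix.cons_val_two,
    Matrix.head_cons, Matrix.tail_cons]
  have hD := dist_nonneg (x := y) (y := y')
  refine ⟨by positivity, ?_⟩
  push_cast
  nlinarith [pow_le_pow_left₀ (abs_nonneg _) hfirst 2, pow_le_pow_left₀ (abs_nonneg _) h0 2,
    pow_le_pow_left₀ (abs_nonneg _) h1 2]

lemma hausdorffMeasure_sheet_le (n : ℕ) :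
    μH[2] (sheet n '' sheetDomain n) ≤ ENNReal.ofReal (9 * width n) := by
  refine ((lipschitzWith_sheet n).hausdorffMeasure_image_le zero_le_two _).trans (le_of_eq ?_)
  rw [show (2 : ℝ) = (Fintype.card (Fin 2) : ℝ) by simp, hausdorffMeasure_pi_real, sheetDomain,
    Real.volume_Icc_pi, Fin.prod_univ_two]
  norm_num [ENNReal.ofReal_mul]

lemma surfMeas_K_lt_top : surfMeas K (omegaC C) < ⊤ := by
  rw [surfMeas, show ((3 : ℕ) : ℝ) - 1 = 2 by norm_num]
  refine measure_lt_top_of_subset_iUnion revSphImage_subset hausdorffMeasure_sheet_le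
    (fun n => by have := width_nonneg n; positivity) ?_
  simp only [width]
  exact (Real.summable_one_div_nat_pow.2 one_lt_two).mul_left 9

lemma cClose_K : CClose C K :=
  ⟨⟨_, subset_K (Or.inr ⟨1, le_rfl, Or.inl rfl⟩)⟩, isClosed_closure, convex_K, K_subset_C,
    volume_C_diff_K_lt_top⟩

end OrthantExample

/-- **Example (Section 4).** In `ℝ³` with `C` the positive orthant, the closed convex hull `K`
of the points `p_n = (1/n², 0, n-1)`, `q_n = (0, 1/n², n-1)` (`n ≥ 1`) and the rays
`{(x,0,0) : x ≥ 1}`, `{(0,x,0) : x ≥ 1}` is a `C`-close set with finite total surface area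
measure for which `C \ K` is unbounded; in particular `K` is not `C`-full. -/
theorem Cclose_finite_measure_not_Cfull :
    ∀ C : Set (EuclideanSpace ℝ (Fin 3)), C = {x | ∀ i, 0 ≤ x i} →
    ∀ A : Set (EuclideanSpace ℝ (Fin 3)),
      A = {p | ∃ n : ℕ, 1 ≤ n ∧
              (p = (WithLp.equiv 2 (Fin 3 → ℝ)).symm ![1 / (n : ℝ) ^ 2, 0, (n : ℝ) - 1] ∨
               p = (WithLp.equiv 2 (Fin 3 → ℝ)).symm ![0, 1 / (n : ℝ) ^ 2, (n : ℝ) - 1])} ∪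
          {p | ∃ t : ℝ, 1 ≤ t ∧
              (p = (WithLp.equiv 2 (Fin 3 → ℝ)).symm ![t, 0, 0] ∨
               p = (WithLp.equiv 2 (Fin 3 → ℝ)).symm ![0, t, 0])} →
    ∀ K : Set (EuclideanSpace ℝ (Fin 3)), K = closure (convexHull ℝ A) →
      CClose C K ∧ surfMeas K (omegaC C) < ⊤ ∧
        ¬ Bornology.IsBounded (C \ K) ∧ ¬ CFull C K := by
  rintro C rfl A rfl K rfl
  have hunbounded := OrthantExample.not_isBounded_C_diff_K
  exact ⟨OrthantExample.cClose_K, OrthantExample.surfMeas_K_lt_top, hunbounded,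
    fun hfull => hunbounded hfull.2.2.2.2⟩
end
end

section
/- There exists a Borel measure φ on Ω_C which is finite on every compact subset of Ω_C but is not the surface area measure of any C-asymptotic convex set. In other words, local finiteness of a Borel measure on Ω_C is not sufficient for it to be the surface area measure of a C-asymptotic set. -/
open scoped RealInnerProductSpace ENNReal NNReal
open MeasureTheory Metric Set

noncomputable section

variable {d : ℕ}

/-! Take a boundary ray `ℝ₊ p` of `C` and a unit normal `u₀` of `C` along it; `u₀` lies on the
relative boundary of `Ω_C`, so it is a limit of unit vectors `uᵢ ∈ Ω_C`. Put at `uᵢ` an atom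
heavier than the area of the slice `C ∩ {⟪uᵢ, ·⟫ = -1}`; as the atoms accumulate only outside
`Ω_C`, this measure is finite on compact subsets of `Ω_C`. If it were the surface area measure of
some `K ⊆ C`, the face of `K` with normal `uᵢ` would be larger than every slice of `C` at a height
in `[-1, 0]` (these are shrunk copies of the slice at height `-1`), so `K ⊆ {⟪uᵢ, ·⟫ < -1}` for
all `i` and hence `K ⊆ {⟪u₀, ·⟫ ≤ -1}`. But `⟪u₀, ·⟫` vanishes on the ray `ℝ₊ p ⊆ bd C`, which a
`C`-asymptotic set approaches. -/

open scoped Pointwise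
open Filter Topology

section Cone

variable {E : Type*} [NormedAddCommGroup E] [NormedSpace ℝ E] {s : Set E}

lemma smul_set_eq_self_of_cone (hs : ∀ x ∈ s, ∀ t : ℝ, 0 ≤ t → t • x ∈ s) {c : ℝ} (hc : 0 < c) :
    c • s = s := by
  refine Subset.antisymm ?_ fun x hx ↦ ?_
  · rintro _ ⟨x, hx, rfl⟩
    exact hs x hx c hc.le
  · exact ⟨c⁻¹ • x, hs x hx _ (inv_nonneg.2 hc.le), smul_inv_smul₀ hc.ne' x⟩

lemma smul_mem_interior_iff_of_cone (hs : ∀ x ∈ s, ∀ t : ℝ, 0 ≤ t → t • x ∈ s) {c : ℝ}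
    (hc : 0 < c) {x : E} : c • x ∈ interior s ↔ x ∈ interior s := by
  rw [← smul_mem_smul_set_iff₀ hc.ne' (interior s) x, ← interior_smul₀ hc.ne',
    smul_set_eq_self_of_cone hs hc]

lemma smul_mem_frontier_of_cone (hs : ∀ x ∈ s, ∀ t : ℝ, 0 ≤ t → t • x ∈ s) (hcl : IsClosed s)
    {x : E} (hx : x ∈ frontier s) {c : ℝ} (hc : 0 < c) : c • x ∈ frontier s := by
  rw [hcl.frontier_eq] at hx ⊢
  exact ⟨hs x hx.1 c hc.le, (smul_mem_interior_iff_of_cone hs hc).not.2 hx.2⟩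

lemma forall_le_zero_of_cone (hs : ∀ x ∈ s, ∀ t : ℝ, 0 ≤ t → t • x ∈ s) (f : E →L[ℝ] ℝ) {r : ℝ}
    (hf : ∀ x ∈ s, f x ≤ r) : ∀ x ∈ s, f x ≤ 0 := by
  intro x hx
  by_contra! hfx
  have := hf _ (hs x hx ((|r| + 1) / f x) (by positivity))
  rw [map_smul, smul_eq_mul, div_mul_cancel₀ _ hfx.ne'] at this
  linarith [le_abs_self r]

lemma exists_ne_zero_mem_frontier (hE : 1 < Module.rank ℝ E) (hcl : IsClosed s)
    (hpointed : ∀ x ∈ s, -x ∈ s → x = 0) (hint : (interior s).Nonempty) :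
    ∃ p ∈ frontier s, p ≠ 0 := by
  have : Nontrivial E := rank_pos_iff_nontrivial.1 (zero_lt_one.trans hE)
  obtain ⟨a, has, ha⟩ : ∃ a ∈ s, a ≠ 0 := by
    by_contra! h
    have : interior s ⊆ interior {0} := interior_mono fun x hx ↦ h x hx
    simp_all
  by_contra! hfr
  have hsplit : ({0}ᶜ : Set E) ⊆ interior s ∪ sᶜ := by
    intro x hx
    by_cases hxs : x ∈ s
    · exact .inl <| by_contra fun hxi ↦ hx (hfr x (hcl.frontier_eq ▸ ⟨hxs, hxi⟩))
    · exact .inr hxs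
  rcases (isConnected_compl_singleton_of_one_lt_rank hE 0).isPreconnected.subset_or_subset
    isOpen_interior hcl.isOpen_compl
    (disjoint_compl_right.mono_left interior_subset) hsplit with h | h
  · exact ha (hpointed a has (interior_subset (h (neg_ne_zero.2 ha))))
  · exact h ha has

end Cone

section Hyperplane

variable {E : Type*} [NormedAddCommGroup E] [InnerProductSpace ℝ E] [FiniteDimensional ℝ E]
  [MeasurableSpace E] [BorelSpace E]

lemma hausdorffMeasure_lt_top_of_subset_hyperplane_s13 {u : E} (hu : u ≠ 0) {c : ℝ} {s : Set E}
    (hb : Bornology.IsBounded s) (hs : s ⊆ {z | ⟪u, z⟫ = c}) :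
    μH[(Module.finrank ℝ E : ℝ) - 1] s < ⊤ := by
  rcases s.eq_empty_or_nonempty with rfl | ⟨x₀, hx₀⟩
  · simp
  set W := (ℝ ∙ u)ᗮ
  have hW : (Module.finrank ℝ W : ℝ) = Module.finrank ℝ E - 1 := by
    have := (ℝ ∙ u).finrank_add_finrank_orthogonal
    rw [finrank_span_singleton hu] at this
    rw [← this]
    push_cast
    ring
  obtain ⟨R, hR⟩ := (isBounded_iff_subset_closedBall x₀).1 hb
  set g : W → E := fun w ↦ (w : E) + x₀
  have hg : Isometry g := (IsometryEquiv.addRight x₀).isometry.comp W.subtypeₗᵢ.isometry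
  have hsub : s ⊆ g '' closedBall 0 R := by
    intro z hz
    have hzW : z - x₀ ∈ W := by
      rw [Submodule.mem_orthogonal_singleton_iff_inner_right, inner_sub_right, hs hz, hs hx₀,
        sub_self]
    refine ⟨⟨z - x₀, hzW⟩, ?_, sub_add_cancel z x₀⟩
    simpa [dist_eq_norm] using hR hz
  rw [← hW]
  calc μH[Module.finrank ℝ W] s ≤ μH[Module.finrank ℝ W] (g '' closedBall 0 R) :=
        measure_mono hsub
    _ = μH[Module.finrank ℝ W] (closedBall (0 : W) R) :=
        hg.hausdorffMeasure_image (.inl (Nat.cast_nonneg _)) _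
    _ < ⊤ := (isCompact_closedBall 0 R).measure_lt_top

end Hyperplane

section PolarCone

variable {C : Set (EuclideanSpace ℝ (Fin d))}

lemma isClosed_polarCone (C : Set (EuclideanSpace ℝ (Fin d))) : IsClosed (polarCone C) := by
  simp only [polarCone, ofPred_forall]
  exact isClosed_biInter fun y _ ↦ isClosed_le (continuous_id.inner continuous_const)
    continuous_const

lemma convex_polarCone (C : Set (EuclideanSpace ℝ (Fin d))) : Convex ℝ (polarCone C) := by
  intro x hx y hy a b ha hb _ z hz
  rw [inner_add_left, real_inner_smul_left, real_inner_smul_left]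
  nlinarith [hx z hz, hy z hz]

lemma smul_mem_polarCone {x : EuclideanSpace ℝ (Fin d)} (hx : x ∈ polarCone C) {t : ℝ}
    (ht : 0 ≤ t) : t • x ∈ polarCone C := fun z hz ↦ by
  rw [real_inner_smul_left]
  exact mul_nonpos_of_nonneg_of_nonpos ht (hx z hz)

lemma toDual_symm_mem_polarCone {f : StrongDual ℝ (EuclideanSpace ℝ (Fin d))}
    (hf : ∀ x ∈ C, f x ≤ 0) : (InnerProductSpace.toDual ℝ _).symm f ∈ polarCone C :=
  fun z hz ↦ by simpa only [InnerProductSpace.toDual_symm_apply] using hf z hz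

lemma exists_pos_forall_inner_le_neg_mul_norm_s13 {u : EuclideanSpace ℝ (Fin d)}
    (hu : u ∈ interior (polarCone C)) : ∃ δ > 0, ∀ z ∈ C, ⟪u, z⟫ ≤ -δ * ‖z‖ := by
  obtain ⟨ε, hε, hball⟩ := Metric.isOpen_iff.1 isOpen_interior u hu
  refine ⟨ε / 2, by positivity, fun z hz ↦ ?_⟩
  rcases eq_or_ne z 0 with rfl | hz0
  · simp
  have hz' : 0 < ‖z‖ := norm_pos_iff.2 hz0
  have hmem : u + (ε / 2 / ‖z‖) • z ∈ polarCone C := by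
    refine interior_subset (hball ?_)
    rw [mem_ball_iff_norm, add_sub_cancel_left, norm_smul, Real.norm_of_nonneg (by positivity),
      div_mul_cancel₀ _ hz'.ne']
    linarith
  have := hmem z hz
  rw [inner_add_left, real_inner_smul_left, real_inner_self_eq_norm_mul_norm,
    div_mul_eq_mul_div, ← mul_assoc, mul_div_cancel_right₀ _ hz'.ne'] at this
  linarith

lemma inner_neg_of_mem_interior_polarCone {u z : EuclideanSpace ℝ (Fin d)}
    (hu : u ∈ interior (polarCone C)) (hz : z ∈ C) (hz0 : z ≠ 0) : ⟪u, z⟫ < 0 := by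
  obtain ⟨δ, hδ, hle⟩ := exists_pos_forall_inner_le_neg_mul_norm_s13 hu
  nlinarith [hle z hz, norm_pos_iff.2 hz0]

lemma measurableSet_omegaC (C : Set (EuclideanSpace ℝ (Fin d))) : MeasurableSet (omegaC C) :=
  isClosed_sphere.measurableSet.inter isOpen_interior.measurableSet

lemma IsPCCCone.zero_mem (hC : IsPCCCone C) : (0 : EuclideanSpace ℝ (Fin d)) ∈ C := by
  obtain ⟨a, ha⟩ := hC.2.2.2.2
  simpa using hC.2.2.1 a (interior_subset ha) 0 le_rfl

lemma IsPCCCone.mem_of_forall_polarCone_inner_nonpos (hC : IsPCCCone C)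
    {x : EuclideanSpace ℝ (Fin d)} (hx : ∀ u ∈ polarCone C, ⟪u, x⟫ ≤ 0) : x ∈ C := by
  by_contra hxC
  obtain ⟨f, r, hfC, hfx⟩ := geometric_hahn_banach_closed_point hC.2.1 hC.1 hxC
  have hf := forall_le_zero_of_cone hC.2.2.1 f fun a ha ↦ (hfC a ha).le
  have := hx _ (toDual_symm_mem_polarCone hf)
  rw [InnerProductSpace.toDual_symm_apply] at this
  linarith [hfC 0 hC.zero_mem, map_zero f]

lemma IsPCCCone.interior_polarCone_nonempty (hC : IsPCCCone C) :
    (interior (polarCone C)).Nonempty := by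
  have h0 : (0 : EuclideanSpace ℝ (Fin d)) ∈ polarCone C := fun y _ ↦ by simp
  rw [(convex_polarCone C).interior_nonempty_iff_affineSpan_eq_top,
    AffineSubspace.affineSpan_eq_top_iff_vectorSpan_eq_top_of_nonempty ℝ _ _ ⟨0, h0⟩]
  -- a vector orthogonal to `C°` lies in `C` together with its negative
  have hspan : Submodule.span ℝ (polarCone C) = ⊤ := by
    refine Submodule.orthogonal_eq_bot_iff.1 (Submodule.eq_bot_iff _ |>.2 fun v hv ↦ ?_)
    have hperp : ∀ u ∈ polarCone C, ⟪u, v⟫ = 0 := fun u hu ↦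
      (Submodule.mem_orthogonal _ _).1 hv u (Submodule.subset_span hu)
    exact hC.2.2.2.1 v (hC.mem_of_forall_polarCone_inner_nonpos fun u hu ↦ (hperp u hu).le)
      (hC.mem_of_forall_polarCone_inner_nonpos fun u hu ↦ by rw [inner_neg_right, hperp u hu,
        neg_zero])
  refine top_unique (hspan ▸ Submodule.span_le.2 fun z hz ↦ ?_)
  rw [SetLike.mem_coe, vectorSpan_def]
  exact Submodule.subset_span ⟨z, hz, 0, h0, by simp⟩

lemma IsPCCCone.exists_unit_mem_polarCone_inner_eq_zero (hC : IsPCCCone C)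
    {p : EuclideanSpace ℝ (Fin d)} (hp : p ∈ frontier C) :
    ∃ u ∈ polarCone C, ‖u‖ = 1 ∧ ⟪u, p⟫ = 0 := by
  rw [hC.1.frontier_eq] at hp
  obtain ⟨f, hf0, hfp⟩ :=
    geometric_hahn_banach_of_nonempty_interior_point hC.2.1 hp.2 hC.2.2.2.2
  have hf := forall_le_zero_of_cone hC.2.2.1 f hfp
  set y := (InnerProductSpace.toDual ℝ (EuclideanSpace ℝ (Fin d))).symm f
  have hy0 : y ≠ 0 := by simpa [y] using hf0
  refine ⟨‖y‖⁻¹ • y, smul_mem_polarCone (toDual_symm_mem_polarCone hf) (by positivity),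
    norm_smul_inv_norm hy0, ?_⟩
  have hfp0 : f p = 0 := le_antisymm (hf p hp.1) (by simpa using hfp 0 hC.zero_mem)
  rw [real_inner_smul_left, InnerProductSpace.toDual_symm_apply, hfp0, mul_zero]

lemma IsPCCCone.mem_closure_omegaC (hC : IsPCCCone C) {p : EuclideanSpace ℝ (Fin d)}
    (hp : p ∈ C) (hp0 : p ≠ 0) {u : EuclideanSpace ℝ (Fin d)} (hu : u ∈ polarCone C)
    (hu1 : ‖u‖ = 1) : u ∈ closure (omegaC C) := by
  have hu' : u ∈ closure (interior (polarCone C)) := by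
    rwa [(convex_polarCone C).closure_interior_eq_closure_of_nonempty_interior
      hC.interior_polarCone_nonempty, (isClosed_polarCone C).closure_eq]
  have hcont : ContinuousAt (fun x : EuclideanSpace ℝ (Fin d) ↦ ‖x‖⁻¹ • x) u :=
    (continuous_norm.continuousAt.inv₀ (by simp [hu1])).smul continuousAt_id
  have hnormalize := mem_closure_image hcont hu'
  rw [hu1, inv_one, one_smul] at hnormalize
  refine closure_mono ?_ hnormalize
  rintro _ ⟨v, hv, rfl⟩
  have hv0 : v ≠ 0 := by
    rintro rfl
    exact (inner_neg_of_mem_interior_polarCone hv hp hp0).ne (inner_zero_left _)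
  exact ⟨mem_sphere_zero_iff_norm.2 (norm_smul_inv_norm hv0),
    (smul_mem_interior_iff_of_cone (fun x hx t ht ↦ smul_mem_polarCone hx ht)
      (by positivity)).2 hv⟩

lemma isBounded_inter_inner_eq {u : EuclideanSpace ℝ (Fin d)}
    (hu : u ∈ interior (polarCone C)) (c : ℝ) :
    Bornology.IsBounded (C ∩ {z | ⟪u, z⟫ = c}) := by
  obtain ⟨δ, hδ, hle⟩ := exists_pos_forall_inner_le_neg_mul_norm_s13 hu
  refine (isBounded_iff_subset_closedBall 0).2 ⟨-c / δ, fun z ⟨hz, hzc⟩ ↦ ?_⟩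
  rw [mem_closedBall_zero_iff, le_div_iff₀ hδ]
  nlinarith [hle z hz, hzc.symm ▸ hle z hz]

lemma hausdorffMeasure_inter_inner_eq_lt_top {u : EuclideanSpace ℝ (Fin d)} (hu : u ∈ omegaC C)
    (c : ℝ) : μH[(d : ℝ) - 1] (C ∩ {z | ⟪u, z⟫ = c}) < ⊤ := by
  have hu0 : u ≠ 0 := ne_zero_of_mem_unit_sphere ⟨u, hu.1⟩
  simpa using hausdorffMeasure_lt_top_of_subset_hyperplane_s13 hu0 (isBounded_inter_inner_eq hu.2 c)
    inter_subset_right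

lemma hausdorffMeasure_inter_inner_eq_le (hcone : ∀ x ∈ C, ∀ t : ℝ, 0 ≤ t → t • x ∈ C)
    {u : EuclideanSpace ℝ (Fin d)} (hu : u ∈ interior (polarCone C)) {s : ℝ} (hs : 0 < s)
    {h : ℝ} (h1 : -1 ≤ h) (h0 : h ≤ 0) :
    μH[s] (C ∩ {z | ⟪u, z⟫ = h}) ≤ μH[s] (C ∩ {z | ⟪u, z⟫ = -1}) := by
  rcases h0.eq_or_lt with rfl | hneg
  · have hzero : C ∩ {z | ⟪u, z⟫ = 0} ⊆ {0} := fun z ⟨hz, hz0⟩ ↦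
      by_contra fun hne ↦ (inner_neg_of_mem_interior_polarCone hu hz hne).ne hz0
    have := Measure.nullSingletonClass_hausdorff (X := EuclideanSpace ℝ (Fin d)) hs
    exact (measure_mono hzero).trans (by simp)
  have hsub : C ∩ {z | ⟪u, z⟫ = h} ⊆ (-h) • (C ∩ {z | ⟪u, z⟫ = -1}) := by
    refine fun z ⟨hz, (hzh : ⟪u, z⟫ = h)⟩ ↦
      ⟨(-h)⁻¹ • z, ⟨hcone z hz _ (by simp [hneg.le]), ?_⟩, smul_inv_smul₀ (neg_ne_zero.2 hneg.ne) z⟩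
    simp [real_inner_smul_right, hzh, hneg.ne]
  have hfactor : ‖-h‖₊ ^ s ≤ 1 := by
    refine NNReal.rpow_le_one ?_ hs.le
    rw [← NNReal.coe_le_coe, coe_nnnorm, Real.norm_eq_abs, abs_of_pos (neg_pos.2 hneg),
      NNReal.coe_one]
    linarith
  calc μH[s] (C ∩ {z | ⟪u, z⟫ = h}) ≤ μH[s] ((-h) • (C ∩ {z | ⟪u, z⟫ = -1})) :=
        measure_mono hsub
    _ = ‖-h‖₊ ^ s • μH[s] (C ∩ {z | ⟪u, z⟫ = -1}) :=
        Measure.hausdorffMeasure_smul₀ hs.le (neg_ne_zero.2 hneg.ne) _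
    _ ≤ μH[s] (C ∩ {z | ⟪u, z⟫ = -1}) := by
        rw [ENNReal.smul_def]
        exact mul_le_of_le_one_left bot_le (by exact_mod_cast hfactor)

lemma forall_inner_lt_neg_one_of_lt_surfMeas (hd : 2 ≤ d)
    (hcone : ∀ x ∈ C, ∀ t : ℝ, 0 ≤ t → t • x ∈ C) {K : Set (EuclideanSpace ℝ (Fin d))}
    (hK : IsClosed K) (hKC : K ⊆ C) {u : EuclideanSpace ℝ (Fin d)}
    (hu : u ∈ interior (polarCone C))
    (hlt : μH[(d : ℝ) - 1] (C ∩ {z | ⟪u, z⟫ = -1}) < surfMeas K {u}) :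
    ∀ y ∈ K, ⟪u, y⟫ < -1 := by
  obtain ⟨x, hxfr, u', hu', hx⟩ : (revSphImage K {u}).Nonempty :=
    nonempty_of_measure_ne_zero (ne_bot_of_gt hlt)
  rw [mem_singleton_iff.1 hu'] at hx
  have hxK := hK.frontier_subset hxfr
  suffices ⟪u, x⟫ < -1 from fun y hy ↦ (hx y hy).trans_lt this
  by_contra! hge
  have hτ : revSphImage K {u} ⊆ C ∩ {z | ⟪u, z⟫ = ⟪u, x⟫} := by
    rintro z ⟨hzfr, u', hu', hz⟩
    rw [mem_singleton_iff.1 hu'] at hz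
    have hzK := hK.frontier_subset hzfr
    exact ⟨hKC hzK, le_antisymm (hx z hzK) (hz x hxK)⟩
  have hd' : (0 : ℝ) < d - 1 := by
    have : (2 : ℝ) ≤ d := by exact_mod_cast hd
    linarith
  exact hlt.not_ge <| (measure_mono hτ).trans <| hausdorffMeasure_inter_inner_eq_le hcone hu hd'
    hge (interior_subset hu x (hKC hxK))

lemma CAsymptotic.exists_inner_gt_neg_one {K : Set (EuclideanSpace ℝ (Fin d))}
    (hK : CAsymptotic C K) (hcone : ∀ x ∈ C, ∀ t : ℝ, 0 ≤ t → t • x ∈ C) (hcl : IsClosed C)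
    {p : EuclideanSpace ℝ (Fin d)} (hp : p ∈ frontier C) (hp0 : p ≠ 0)
    {u : EuclideanSpace ℝ (Fin d)} (hu : ‖u‖ = 1) (hup : ⟪u, p⟫ = 0) :
    ∃ y ∈ K, -1 < ⟪u, y⟫ := by
  obtain ⟨R, hR⟩ := hK.2.2.2.2 1 one_pos
  have hp' : 0 < ‖p‖ := norm_pos_iff.2 hp0
  set t := (|R| + 1) / ‖p‖
  have ht : 0 < t := by positivity
  have htp : R ≤ ‖t • p‖ := by
    rw [norm_smul, Real.norm_of_nonneg ht.le, div_mul_cancel₀ _ hp'.ne']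
    linarith [le_abs_self R]
  obtain ⟨y, hyK, hy⟩ :=
    (infDist_lt_iff hK.1).1 (hR _ (smul_mem_frontier_of_cone hcone hcl hp ht) htp)
  refine ⟨y, hyK, ?_⟩
  have hshift : ⟪u, y - t • p⟫ = ⟪u, y⟫ := by
    rw [inner_sub_right, real_inner_smul_right, hup, mul_zero, sub_zero]
  have hcs := neg_le_of_abs_le (abs_real_inner_le_norm u (y - t • p))
  rw [hshift, hu, one_mul, ← dist_eq_norm, dist_comm] at hcs
  linarith

end PolarCone

section DiracSum

variable {X : Type*} [MeasurableSpace X] (a : ℕ → ℝ≥0∞) (x : ℕ → X)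

lemma sum_smul_dirac_apply_eq_zero {s : Set X} (hs : MeasurableSet s) (hx : ∀ i, x i ∉ s) :
    Measure.sum (fun i ↦ a i • Measure.dirac (x i)) s = 0 := by
  simp [Measure.sum_apply _ hs, Measure.dirac_apply' _ hs, hx]

lemma le_sum_smul_dirac_apply_singleton [MeasurableSingletonClass X] (i : ℕ) :
    a i ≤ Measure.sum (fun i ↦ a i • Measure.dirac (x i)) {x i} := by
  rw [Measure.sum_apply _ (measurableSet_singleton _)]
  exact le_trans (by simp) (ENNReal.le_tsum i)

lemma sum_smul_dirac_apply_lt_top_of_tendsto [TopologicalSpace X] [OpensMeasurableSpace X]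
    {s : Set X} (hs : IsClosed s) {x₀ : X} (hx₀ : x₀ ∉ s) (hx : Tendsto x atTop (𝓝 x₀))
    (ha : ∀ i, a i < ⊤) : Measure.sum (fun i ↦ a i • Measure.dirac (x i)) s < ⊤ := by
  obtain ⟨N, hN⟩ := eventually_atTop.1 (hx.eventually (hs.isOpen_compl.mem_nhds hx₀))
  rw [Measure.sum_apply _ hs.measurableSet, tsum_eq_sum (s := Finset.range N) fun i hi ↦ ?_]
  · refine ENNReal.sum_lt_top.2 fun i _ ↦ lt_of_le_of_lt ?_ (ha i)
    rw [Measure.smul_apply, smul_eq_mul]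
    exact mul_le_of_le_one_right bot_le prob_le_one
  · simp [Measure.dirac_apply' _ hs.measurableSet, hN i (by simpa using hi)]

end DiracSum

/-- **Section 4.** There is a Borel measure `φ` on `Ω_C` which is finite on every compact
subset of `Ω_C` but is not the surface area measure of any `C`-asymptotic convex set. -/
theorem locally_finite_not_sufficient (d : ℕ) (hd : 2 ≤ d)
    (C : Set (EuclideanSpace ℝ (Fin d))) (hC : IsPCCCone C) :
    ∃ φ : Measure (EuclideanSpace ℝ (Fin d)), φ (omegaC C)ᶜ = 0 ∧
      (∀ ω ⊆ omegaC C, IsCompact ω → φ ω < ⊤) ∧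
      ¬ ∃ K : Set (EuclideanSpace ℝ (Fin d)), CAsymptotic C K ∧
          ∀ ω ⊆ omegaC C, MeasurableSet ω → surfMeas K ω = φ ω := by
  have ⟨hcl, _, hcone, hpointed, hint⟩ := hC
  have hrank : 1 < Module.rank ℝ (EuclideanSpace ℝ (Fin d)) := by
    rw [← Module.finrank_eq_rank, finrank_euclideanSpace_fin]
    exact_mod_cast hd
  obtain ⟨p, hp, hp0⟩ := exists_ne_zero_mem_frontier hrank hcl hpointed hint
  have hpC : p ∈ C := hcl.frontier_subset hp
  obtain ⟨u₀, hu₀C, hu₀, hu₀p⟩ := hC.exists_unit_mem_polarCone_inner_eq_zero hp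
  have hu₀Ω : u₀ ∉ omegaC C := fun h ↦
    (inner_neg_of_mem_interior_polarCone h.2 hpC hp0).ne hu₀p
  obtain ⟨u, huΩ, hu⟩ := mem_closure_iff_seq_limit.1 (hC.mem_closure_omegaC hpC hp0 hu₀C hu₀)
  set a : ℕ → ℝ≥0∞ := fun i ↦ μH[(d : ℝ) - 1] (C ∩ {z | ⟪u i, z⟫ = -1}) + 1
  have ha : ∀ i, a i < ⊤ := fun i ↦
    ENNReal.add_lt_top.2 ⟨hausdorffMeasure_inter_inner_eq_lt_top (huΩ i) _, ENNReal.one_lt_top⟩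
  refine ⟨Measure.sum fun i ↦ a i • Measure.dirac (u i),
    sum_smul_dirac_apply_eq_zero a u (measurableSet_omegaC C).compl fun i ↦ not_not.2 (huΩ i),
    fun ω hω hωc ↦ sum_smul_dirac_apply_lt_top_of_tendsto a u hωc.isClosed (hu₀Ω <| hω ·) hu ha,
    ?_⟩
  rintro ⟨K, hK, hφ⟩
  have hKu : ∀ i, ∀ y ∈ K, ⟪u i, y⟫ < -1 := fun i ↦
    forall_inner_lt_neg_one_of_lt_surfMeas hd hcone hK.2.1 hK.2.2.2.1 (huΩ i).2 <| by
      rw [hφ {u i} (singleton_subset_iff.2 (huΩ i)) (measurableSet_singleton _)]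
      exact (ENNReal.lt_add_right (hausdorffMeasure_inter_inner_eq_lt_top (huΩ i) _).ne
        one_ne_zero).trans_le (le_sum_smul_dirac_apply_singleton a u i)
  obtain ⟨y, hyK, hy⟩ := hK.exists_inner_gt_neg_one hcone hcl hp hp0 hu₀ hu₀p
  exact hy.not_ge <| le_of_tendsto' (hu.inner tendsto_const_nhds) fun i ↦ (hKu i y hyK).le

end
end
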